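/- arXiv:2112.09429 — 8 statements merged into one kernel-verified Lean document; each statement's English description precedes it below -/
import Mathlib

section
/- Let n be a positive integer, θ ∈ (0,1], and a ∈ ℝ^n. For α ∈ (0,1) let Q_α(a) = inf{η ∈ ℝ : (1/n)·#{i : a_i > η} ≤ α} be the (1−α)-quantile of the empirical measure (1/n)∑_{i=1}^n δ_{a_i}. Then the (1−θ)-superquantile satisfies the dual representation (1/θ)∫_0^θ Q_α(a) dα = max_{π ∈ P_θ} ∑_{i=1}^n π_i a_i. -/
/-!
Sort `a` decreasingly, `b = a ∘ σ`. The empirical quantile function is then the step function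
`α ↦ b ⌊α n⌋`, so `∫₀^θ Q_α dα = ∑ₖ (g (k+1) - g k) b k` with breakpoints `g k = min θ (k / n)`.
Dividing by `θ`, this is `∑ₖ w k b k` for weights `w` putting the full mass `1/(θn)` on the largest
values, the remainder on one value and nothing on the rest. These weights lie in `P_θ` and are
optimal by the bathtub principle: with the threshold `t = b K` at the partially filled index, every
`π ∈ P_θ` has `(w k - π k) (b k - t) ≥ 0` termwise, and `∑ (w - π) = 0`.
-/

noncomputable section

open Finset MeasureTheory

def empiricalQuantile {n : ℕ} (a : Fin n → ℝ) (α : ℝ) : ℝ :=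
  sInf {η : ℝ | (#{i | η < a i} : ℝ) / n ≤ α}

theorem empiricalQuantile_comp_equiv {n : ℕ} (a : Fin n → ℝ) (σ : Fin n ≃ Fin n) :
    empiricalQuantile (a ∘ σ) = empiricalQuantile a := by
  have hcard (η : ℝ) : #{i | η < a (σ i)} = #{i | η < a i} := card_equiv σ (by simp)
  ext α
  simp only [empiricalQuantile, Function.comp_apply, hcard]

theorem exists_equiv_antitone_comp {n : ℕ} {α : Type*} [LinearOrder α] (a : Fin n → α) :
    ∃ σ : Fin n ≃ Fin n, Antitone (a ∘ σ) :=
  ⟨Fin.revPerm.trans (Tuple.sort a), fun _ _ h => Tuple.monotone_sort a (Fin.rev_le_rev.mpr h)⟩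

section Antitone

variable {n : ℕ} {β : Type*} [LinearOrder β] {b : Fin n → β}

theorem card_filter_lt_le_iff_of_antitone (hb : Antitone b) (η : β) (m : Fin n) :
    #{i | η < b i} ≤ m ↔ b m ≤ η := by
  constructor
  · intro hcard
    by_contra! hm
    have : Iic m ⊆ ({i | η < b i} : Finset (Fin n)) := fun i hi => by
      simpa using hm.trans_le (hb (mem_Iic.mp hi))
    have := card_le_card this
    rw [Fin.card_Iic] at this
    omega
  · intro hm
    calc #{i | η < b i} ≤ #(Iio m) := card_le_card fun i hi => by
          simp only [mem_filter, mem_univ, true_and] at hi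
          exact mem_Iio.mpr (hb.reflect_lt (hm.trans_lt hi))
      _ = m := Fin.card_Iio m

end Antitone

theorem empiricalQuantile_eq_of_antitone {n : ℕ} {b : Fin n → ℝ} (hb : Antitone b) {α : ℝ}
    (k : Fin n) (hk : (k : ℝ) ≤ α * n) (hk' : α * n < k + 1) :
    empiricalQuantile b α = b k := by
  have hn : (0 : ℝ) < n := by exact_mod_cast k.pos
  have hfloor : ⌊α * n⌋₊ = k := (Nat.floor_eq_iff ((Nat.cast_nonneg _).trans hk)).mpr ⟨hk, hk'⟩
  suffices {η : ℝ | (#{i | η < b i} : ℝ) / n ≤ α} = Set.Ici (b k) from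
    (congrArg sInf this).trans csInf_Ici
  ext η
  rw [Set.mem_ofPred_eq, div_le_iff₀ hn, ← Nat.le_floor_iff ((Nat.cast_nonneg _).trans hk), hfloor,
    card_filter_lt_le_iff_of_antitone hb, Set.mem_Ici]

def truncGrid (θ : ℝ) (n k : ℕ) : ℝ := min θ (k / n)

section truncGrid

variable {θ α : ℝ} {n k : ℕ}

theorem truncGrid_zero (hθ : 0 ≤ θ) : truncGrid θ n 0 = 0 := by
  simp [truncGrid, hθ]

theorem truncGrid_self (hn : n ≠ 0) (hθ : θ ≤ 1) : truncGrid θ n n = θ := by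
  simp [truncGrid, hn, hθ]

theorem truncGrid_mono : Monotone (truncGrid θ n) := fun k l hkl =>
  min_le_min_left θ (by gcongr)

theorem truncGrid_succ_sub_le : truncGrid θ n (k + 1) - truncGrid θ n k ≤ 1 / n := by
  have := min_le_min_right (k / n + 1 / n : ℝ)
    (le_add_of_nonneg_right (by positivity) : θ ≤ θ + 1 / n)
  rw [min_add_add_right] at this
  rw [truncGrid, truncGrid, Nat.cast_succ, add_div]
  linarith

theorem truncGrid_of_le (hn : 0 < n) (h : (k : ℝ) ≤ θ * n) : truncGrid θ n k = k / n :=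
  min_eq_right ((div_le_iff₀ (by exact_mod_cast hn)).mpr h)

theorem truncGrid_of_ge (hn : 0 < n) (h : θ * n ≤ k) : truncGrid θ n k = θ :=
  min_eq_left ((le_div_iff₀ (by exact_mod_cast hn)).mpr h)

theorem mul_mem_Ioo_of_mem_Ioo_truncGrid (hn : 0 < n)
    (hα : α ∈ Set.Ioo (truncGrid θ n k) (truncGrid θ n (k + 1))) :
    α * n ∈ Set.Ioo (k : ℝ) (k + 1) := by
  have hn' : (0 : ℝ) < n := by exact_mod_cast hn
  obtain ⟨hlo, hhi⟩ := hα
  have hαθ : α < θ := hhi.trans_le (min_le_left _ _)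
  have hlo' : (k : ℝ) / n < α := (min_lt_iff.mp hlo).resolve_left hαθ.not_gt
  have hhi' : α < (k + 1 : ℝ) / n := by exact_mod_cast hhi.trans_le (min_le_right _ _)
  exact ⟨(div_lt_iff₀ hn').mp hlo', (lt_div_iff₀ hn').mp hhi'⟩

end truncGrid

theorem integral_empiricalQuantile_of_antitone {n : ℕ} (hn : 0 < n) {b : Fin n → ℝ}
    (hb : Antitone b) {θ : ℝ} (hθ0 : 0 ≤ θ) (hθ1 : θ ≤ 1) :
    ∫ α in (0 : ℝ)..θ, empiricalQuantile b α =
      ∑ k : Fin n, (truncGrid θ n (k + 1) - truncGrid θ n k) * b k := by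
  have hpiece (k : Fin n) : Set.EqOn (empiricalQuantile b) (fun _ => b k)
      (Set.uIoo (truncGrid θ n k) (truncGrid θ n (k + 1))) := fun α hα => by
    rw [Set.uIoo_of_le (truncGrid_mono (Nat.le_succ k))] at hα
    have := mul_mem_Ioo_of_mem_Ioo_truncGrid hn hα
    exact empiricalQuantile_eq_of_antitone hb k this.1.le this.2
  have hsum := intervalIntegral.sum_integral_adjacent_intervals (f := empiricalQuantile b)
    (μ := volume) (a := truncGrid θ n) (n := n)
    fun k hk => (intervalIntegrable_congr_uIoo (hpiece ⟨k, hk⟩)).mpr intervalIntegrable_const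
  rw [truncGrid_zero hθ0, truncGrid_self hn.ne' hθ1, sum_range] at hsum
  rw [← hsum]
  refine sum_congr rfl fun k _ => ?_
  rw [intervalIntegral.integral_congr_uIoo (hpiece k), intervalIntegral.integral_const, smul_eq_mul]

def superquantileWeight (θ : ℝ) (n k : ℕ) : ℝ := (truncGrid θ n (k + 1) - truncGrid θ n k) / θ

section superquantileWeight

variable {θ : ℝ} {n k : ℕ}

theorem superquantileWeight_nonneg (hθ : 0 ≤ θ) : 0 ≤ superquantileWeight θ n k :=
  div_nonneg (sub_nonneg.mpr (truncGrid_mono k.le_succ)) hθ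

theorem superquantileWeight_le (hθ : 0 ≤ θ) : superquantileWeight θ n k ≤ 1 / (θ * n) :=
  calc superquantileWeight θ n k ≤ 1 / n / θ := div_le_div_of_nonneg_right truncGrid_succ_sub_le hθ
    _ = 1 / (θ * n) := by rw [div_div, mul_comm]

theorem sum_superquantileWeight (hn : 0 < n) (hθ0 : 0 < θ) (hθ1 : θ ≤ 1) :
    ∑ k : Fin n, superquantileWeight θ n k = 1 := by
  rw [← sum_range (superquantileWeight θ n)]
  simp only [superquantileWeight]
  rw [← sum_div, sum_range_sub, truncGrid_self hn.ne' hθ1, truncGrid_zero hθ0.le, sub_zero,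
    div_self hθ0.ne']

theorem superquantileWeight_of_succ_le (hn : 0 < n) (h : (k + 1 : ℝ) ≤ θ * n) :
    superquantileWeight θ n k = 1 / (θ * n) := by
  rw [superquantileWeight, truncGrid_of_le hn (by exact_mod_cast h),
    truncGrid_of_le hn (by linarith)]
  push_cast
  field_simp
  ring

theorem superquantileWeight_of_ge (hn : 0 < n) (h : θ * n ≤ k) : superquantileWeight θ n k = 0 := by
  rw [superquantileWeight, truncGrid_of_ge hn h, truncGrid_of_ge hn (by push_cast; linarith),
    sub_self, zero_div]

theorem exists_superquantileWeight_threshold (hn : 0 < n) (hθ : θ ≤ 1) :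
    ∃ K : Fin n, ∀ k : Fin n, (k < K → superquantileWeight θ n k = 1 / (θ * n)) ∧
      (K < k → superquantileWeight θ n k = 0) := by
  have hceil : ⌈θ * n⌉₊ ≤ n :=
    Nat.ceil_le.mpr (by nlinarith [(Nat.cast_nonneg n : (0 : ℝ) ≤ n)])
  refine ⟨⟨⌈θ * n⌉₊ - 1, by omega⟩, fun k => ⟨fun hk => ?_, fun hk => ?_⟩⟩
  · have : k + 1 < ⌈θ * n⌉₊ := by have : (k : ℕ) < ⌈θ * n⌉₊ - 1 := hk; omega
    exact superquantileWeight_of_succ_le hn (by exact_mod_cast (Nat.lt_ceil.mp this).le)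
  · have : ⌈θ * n⌉₊ ≤ k := by have : ⌈θ * n⌉₊ - 1 < (k : ℕ) := hk; omega
    exact superquantileWeight_of_ge hn (Nat.ceil_le.mp this)

end superquantileWeight

theorem sum_mul_le_sum_mul_of_bathtub {ι : Type*} [Fintype ι] {b p q : ι → ℝ} {c t : ℝ}
    (hp_hi : ∀ i, t < b i → p i = c) (hp_lo : ∀ i, b i < t → p i = 0)
    (hq0 : ∀ i, 0 ≤ q i) (hqc : ∀ i, q i ≤ c) (hsum : ∑ i, q i = ∑ i, p i) :
    ∑ i, q i * b i ≤ ∑ i, p i * b i := by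
  have hshift : ∑ i, (p i - q i) * (b i - t) = ∑ i, p i * b i - ∑ i, q i * b i := by
    simp only [sub_mul, mul_sub, sum_sub_distrib, ← sum_mul, hsum]
    ring
  have hterm (i : ι) : 0 ≤ (p i - q i) * (b i - t) := by
    rcases lt_trichotomy (b i) t with h | h | h
    · rw [hp_lo i h]; nlinarith [hq0 i]
    · rw [h, sub_self, mul_zero]
    · rw [hp_hi i h]; nlinarith [hqc i]
  linarith [sum_nonneg fun i (_ : i ∈ univ) => hterm i]

/-- Dual representation of the superquantile of the empirical measure of `a`:
the average of the `(1-α)`-quantiles over `α ∈ (0, θ)` equals the maximum of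
`∑ i, π i * a i` over the polytope `P_θ`. -/
theorem superquantile_dual_representation
    (n : ℕ) (hn : 0 < n) (θ : ℝ) (hθ : θ ∈ Set.Ioc (0:ℝ) 1) (a : Fin n → ℝ) :
    IsGreatest
      {x : ℝ | ∃ π : Fin n → ℝ, (∀ i, 0 ≤ π i) ∧ (∑ i, π i = 1) ∧
        (∀ i, π i ≤ 1 / (θ * n)) ∧ x = ∑ i, π i * a i}
      ((1 / θ) * ∫ α in (0:ℝ)..θ,
        sInf {η : ℝ | ((Finset.univ.filter (fun i => η < a i)).card : ℝ) / n ≤ α}) := by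
  obtain ⟨hθ0, hθ1⟩ := hθ
  obtain ⟨σ, hσ⟩ := exists_equiv_antitone_comp a
  set w : Fin n → ℝ := fun k => superquantileWeight θ n k
  have hvalue : (1 / θ) * ∫ α in (0:ℝ)..θ, empiricalQuantile a α = ∑ k, w k * a (σ k) := by
    rw [← empiricalQuantile_comp_equiv a σ, integral_empiricalQuantile_of_antitone hn hσ hθ0.le hθ1,
      mul_sum]
    refine sum_congr rfl fun k _ => ?_
    simp only [w, superquantileWeight, Function.comp_apply]
    ring
  change IsGreatest _ ((1 / θ) * ∫ α in (0:ℝ)..θ, empiricalQuantile a α)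
  rw [hvalue]
  refine ⟨⟨fun i => w (σ.symm i), fun _ => superquantileWeight_nonneg hθ0.le, ?_,
    fun _ => superquantileWeight_le hθ0.le, ?_⟩, ?_⟩
  · rw [Equiv.sum_comp σ.symm w]; exact sum_superquantileWeight hn hθ0 hθ1
  · rw [← Equiv.sum_comp σ (fun i => w (σ.symm i) * a i)]
    simp only [Equiv.symm_apply_apply]
  rintro _ ⟨π, hπ0, hπ1, hπc, rfl⟩
  obtain ⟨K, hK⟩ := exists_superquantileWeight_threshold hn hθ1
  rw [← Equiv.sum_comp σ]
  exact sum_mul_le_sum_mul_of_bathtub (t := a (σ K)) (fun k hk => (hK k).1 (hσ.reflect_lt hk))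
    (fun k hk => (hK k).2 (hσ.reflect_lt hk)) (fun _ => hπ0 _) (fun _ => hπc _)
    (by rw [Equiv.sum_comp σ π, hπ1]; exact (sum_superquantileWeight hn hθ0 hθ1).symm)
end
end

section
/- Let n be a positive integer, θ ∈ (0,1), and a ∈ ℝ^n with a_1 < a_2 < ⋯ < a_n. Set i* = n − ⌊θn⌋. Then the maximizer of π ↦ ∑_{i=1}^n π_i a_i over P_θ is unique, and it is given by π*_i = 1/(θn) for i > i*, π*_{i*} = 1 − ⌊θn⌋/(θn), and π*_i = 0 for i < i*; consequently max_{π∈P_θ} ∑_i π_i a_i = (1/(θn)) ∑_{i=i*+1}^n a_i + (1 − ⌊θn⌋/(θn)) a_{i*}. -/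
/-!
The candidate `π*` sits at the lower bound `0` below the pivot `m = i*` and at the upper bound
`1/(θn)` above it. Hence for every feasible `π` each term `(π*ᵢ - πᵢ)(aᵢ - a_m)` is nonnegative,
and since `π` and `π*` have the same mass these terms sum to `∑ π*ᵢ aᵢ - ∑ πᵢ aᵢ`. If the two
values agree, every term vanishes; strict monotonicity of `a` then forces `πᵢ = π*ᵢ` for `i ≠ m`,
and the mass constraint gives the remaining coordinate.
-/

open Finset

section ThresholdWeight

variable {ι : Type*} [LinearOrder ι]

def thresholdWeight (m : ι) (c d : ℝ) (i : ι) : ℝ :=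
  if m < i then c else if i = m then d else 0

variable {m : ι} {c d : ℝ} {π a : ι → ℝ}

theorem thresholdWeight_eq_add (i : ι) :
    thresholdWeight m c d i = (if m < i then c else 0) + (if i = m then d else 0) := by
  unfold thresholdWeight
  split_ifs <;> simp_all

theorem thresholdWeight_mem_Icc (hd : 0 ≤ d) (hdc : d ≤ c) (i : ι) :
    thresholdWeight m c d i ∈ Set.Icc 0 c := by
  unfold thresholdWeight
  split_ifs <;> constructor <;> linarith

theorem sub_mul_sub_nonneg (ha : Monotone a) (hπ : ∀ i, π i ∈ Set.Icc 0 c) (i : ι) :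
    0 ≤ (thresholdWeight m c d i - π i) * (a i - a m) := by
  rcases lt_trichotomy i m with h | rfl | h
  · simp only [thresholdWeight, h.not_gt, h.ne, if_false, zero_sub]
    exact mul_nonneg_of_nonpos_of_nonpos (by linarith [(hπ i).1]) (sub_nonpos.2 (ha h.le))
  · simp
  · simp only [thresholdWeight, h, if_true]
    exact mul_nonneg (sub_nonneg.2 (hπ i).2) (sub_nonneg.2 (ha h.le))

variable [Fintype ι]

theorem sum_sub_mul_sub_eq (hπ : ∑ i, π i = ∑ i, thresholdWeight m c d i) :
    ∑ i, (thresholdWeight m c d i - π i) * (a i - a m)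
      = ∑ i, thresholdWeight m c d i * a i - ∑ i, π i * a i := by
  simp only [sub_mul, mul_sub, sum_sub_distrib, ← sum_mul, hπ]
  ring

theorem sum_mul_le_sum_thresholdWeight_mul (ha : Monotone a) (hπ : ∀ i, π i ∈ Set.Icc 0 c)
    (hsum : ∑ i, π i = ∑ i, thresholdWeight m c d i) :
    ∑ i, π i * a i ≤ ∑ i, thresholdWeight m c d i * a i := by
  have := sum_nonneg fun i (_ : i ∈ univ) => sub_mul_sub_nonneg (m := m) (d := d) ha hπ i
  rw [sum_sub_mul_sub_eq hsum] at this
  linarith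

theorem eq_thresholdWeight_of_sum_mul_eq (ha : StrictMono a) (hπ : ∀ i, π i ∈ Set.Icc 0 c)
    (hsum : ∑ i, π i = ∑ i, thresholdWeight m c d i)
    (heq : ∑ i, π i * a i = ∑ i, thresholdWeight m c d i * a i) :
    π = thresholdWeight m c d := by
  have hzero := (sum_eq_zero_iff_of_nonneg fun i (_ : i ∈ univ) =>
    sub_mul_sub_nonneg (m := m) (d := d) ha.monotone hπ i).1
    (by rw [sum_sub_mul_sub_eq hsum, heq, sub_self])
  have hoff : ∀ i ≠ m, π i = thresholdWeight m c d i := fun i hi =>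
    (sub_eq_zero.1 ((mul_eq_zero.1 (hzero i (mem_univ i))).resolve_right
      (sub_ne_zero.2 (ha.injective.ne hi)))).symm
  have hm : ∑ i, (π i - thresholdWeight m c d i) = π m - thresholdWeight m c d m :=
    sum_eq_single m (fun i _ hi => sub_eq_zero.2 (hoff i hi)) (by simp)
  rw [sum_sub_distrib, hsum, sub_self] at hm
  funext i
  rcases eq_or_ne i m with rfl | hi
  · linarith
  · exact hoff i hi

variable [LocallyFiniteOrderTop ι]

theorem sum_thresholdWeight_mul (g : ι → ℝ) :
    ∑ i, thresholdWeight m c d i * g i = c * ∑ i ∈ Ioi m, g i + d * g m := by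
  simp only [thresholdWeight_eq_add, add_mul, ite_mul, zero_mul, sum_add_distrib,
    ← sum_filter, filter_lt_eq_Ioi, mul_sum, filter_eq', mem_univ, if_true, sum_singleton]

theorem sum_thresholdWeight : ∑ i, thresholdWeight m c d i = c * #(Ioi m) + d := by
  simpa [mul_comm] using sum_thresholdWeight_mul (m := m) (c := c) (d := d) (fun _ => 1)

end ThresholdWeight

theorem Nat.floor_mul_natCast_lt {θ : ℝ} {n : ℕ} (hθ : θ < 1) (hn : 0 < n) : ⌊θ * n⌋₊ < n :=
  (Nat.floor_lt' hn.ne').2 (mul_lt_of_lt_one_left (Nat.cast_pos.2 hn) hθ)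

theorem one_sub_floor_div_le_one_div {x : ℝ} (hx : 0 < x) : 1 - ⌊x⌋₊ / x ≤ 1 / x := by
  rw [one_sub_div hx.ne', div_le_div_iff_of_pos_right hx]
  linarith [Nat.lt_floor_add_one x]

/-- In 0-indexed form the paper's `i* = n - ⌊θn⌋` is the index `n - k - 1`. -/
theorem superquantile_unique_maximizer
    (n : ℕ) (hn : 0 < n) (θ : ℝ) (hθ : θ ∈ Set.Ioo (0:ℝ) 1)
    (a : Fin n → ℝ) (ha : StrictMono a) :
    ∀ k : ℕ, k = ⌊θ * (n : ℝ)⌋₊ →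
    ∀ πstar : Fin n → ℝ,
      πstar = (fun i : Fin n => if n - k ≤ (i : ℕ) then 1 / (θ * n)
               else if (i : ℕ) + 1 = n - k then 1 - k / (θ * n) else 0) →
      ((∀ i, 0 ≤ πstar i) ∧ (∑ i, πstar i = 1) ∧ (∀ i, πstar i ≤ 1 / (θ * n))) ∧
      (∀ π : Fin n → ℝ, (∀ i, 0 ≤ π i) → (∑ i, π i = 1) → (∀ i, π i ≤ 1 / (θ * n)) →
        ∑ i, π i * a i ≤ ∑ i, πstar i * a i) ∧
      (∀ π : Fin n → ℝ, (∀ i, 0 ≤ π i) → (∑ i, π i = 1) → (∀ i, π i ≤ 1 / (θ * n)) →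
        ∑ i, π i * a i = ∑ i, πstar i * a i → π = πstar) ∧
      (∑ i, πstar i * a i
        = (1 / (θ * n)) * ∑ i ∈ Finset.univ.filter (fun i : Fin n => n - k ≤ (i : ℕ)), a i
          + (1 - k / (θ * n)) * a ⟨n - k - 1, by omega⟩) := by
  intro k hk πstar hπstar
  obtain ⟨hθ0, hθ1⟩ := hθ
  have hθn : 0 < θ * n := mul_pos hθ0 (Nat.cast_pos.2 hn)
  have hkn : k < n := hk ▸ Nat.floor_mul_natCast_lt hθ1 hn
  set m : Fin n := ⟨n - k - 1, by omega⟩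
  have hπstar_eq : πstar = thresholdWeight m (1 / (θ * n)) (1 - k / (θ * n)) := by
    subst hπstar
    funext i
    simp only [thresholdWeight, Fin.lt_def, Fin.ext_iff, m]
    split_ifs <;> first | rfl | omega
  have hIoi : univ.filter (fun i : Fin n => n - k ≤ (i : ℕ)) = Ioi m := by
    ext i
    simp only [mem_filter, mem_univ, true_and, mem_Ioi, Fin.lt_def, m]
    omega
  have hmass : ∑ i, thresholdWeight m (1 / (θ * n)) (1 - k / (θ * n)) i = 1 := by
    rw [sum_thresholdWeight, Fin.card_Ioi, show n - 1 - (n - k - 1) = k by omega]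
    field_simp
    ring
  have hd0 : 0 ≤ 1 - k / (θ * n) :=
    hk ▸ sub_nonneg.2 (div_le_one_of_le₀ (Nat.floor_le hθn.le) hθn.le)
  have hdc : 1 - k / (θ * n) ≤ 1 / (θ * n) := hk ▸ one_sub_floor_div_le_one_div hθn
  have hfeas := thresholdWeight_mem_Icc (m := m) hd0 hdc
  rw [hπstar_eq]
  refine ⟨⟨fun i => (hfeas i).1, hmass, fun i => (hfeas i).2⟩,
    fun π h0 hs hub => sum_mul_le_sum_thresholdWeight_mul ha.monotone
      (fun i => ⟨h0 i, hub i⟩) (hs.trans hmass.symm),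
    fun π h0 hs hub heq => eq_thresholdWeight_of_sum_mul_eq ha
      (fun i => ⟨h0 i, hub i⟩) (hs.trans hmass.symm) heq,
    by rw [sum_thresholdWeight_mul, hIoi]⟩
end

section
/- Let n be a positive integer, θ ∈ (0,1) with k := θn a positive integer, and a ∈ ℝ^n with a_1 < a_2 < ⋯ < a_n. Let Q_θ = inf{η ∈ ℝ : (1/n)·#{i : a_i > η} ≤ θ} (so Q_θ = a_{n−k}). Then the set {i : a_i > Q_θ} has exactly k elements (the indices of the k largest entries), and the tail average equals the superquantile: (1/k)∑_{i : a_i > Q_θ} a_i = max_{π∈P_θ} ∑_{i=1}^n π_i a_i; moreover the unique maximizer π* satisfies π*_i = 𝟙(a_i > Q_θ)/k for every i. -/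
open scoped BigOperators

noncomputable section

/-- When `θn = k` is a positive integer and `a_1 < ⋯ < a_n`, the tail set
`{i : a_i > Q_θ}` (with `Q_θ` the `(1-θ)`-quantile) has exactly `k` elements, the tail
average equals the superquantile `max_{π ∈ P_θ} ∑ π i a i`, and the unique maximizer is
`π*_i = 𝟙(a_i > Q_θ)/k`. -/
theorem tail_average_eq_superquantile
    (n k : ℕ) (hn : 0 < n) (hk : 0 < k) (θ : ℝ) (hθ : θ ∈ Set.Ioo (0:ℝ) 1)
    (hθn : θ * (n : ℝ) = (k : ℝ))
    (a : Fin n → ℝ) (ha : StrictMono a) :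
    ∀ Q : ℝ, Q = sInf {η : ℝ | ((Finset.univ.filter (fun i => η < a i)).card : ℝ) / n ≤ θ} →
    ∀ πstar : Fin n → ℝ, πstar = (fun i : Fin n => (if Q < a i then 1 else 0) / (k : ℝ)) →
      ((Finset.univ.filter (fun i : Fin n => Q < a i)).card = k) ∧
      IsGreatest
        {x : ℝ | ∃ π : Fin n → ℝ, (∀ i, 0 ≤ π i) ∧ (∑ i, π i = 1) ∧
          (∀ i, π i ≤ 1 / (θ * n)) ∧ x = ∑ i, π i * a i}
        ((1 / (k : ℝ)) * ∑ i ∈ Finset.univ.filter (fun i : Fin n => Q < a i), a i) ∧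
      ((∀ i, 0 ≤ πstar i) ∧ (∑ i, πstar i = 1) ∧ (∀ i, πstar i ≤ 1 / (θ * n)) ∧
        ∑ i, πstar i * a i
          = (1 / (k : ℝ)) * ∑ i ∈ Finset.univ.filter (fun i : Fin n => Q < a i), a i) ∧
      (∀ π : Fin n → ℝ, (∀ i, 0 ≤ π i) → (∑ i, π i = 1) → (∀ i, π i ≤ 1 / (θ * n)) →
        ∑ i, π i * a i
          = (1 / (k : ℝ)) * ∑ i ∈ Finset.univ.filter (fun i : Fin n => Q < a i), a i →
        π = πstar) := by
  intro Q hQ πstar hπstar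
  obtain ⟨hθ0, hθ1⟩ := hθ
  have hn' : (0:ℝ) < n := by exact_mod_cast hn
  have hk' : (0:ℝ) < k := by exact_mod_cast hk
  have hkn : k < n := by
    have : (k:ℝ) < n := by nlinarith
    exact_mod_cast this
  have hj' : n - k - 1 < n := by omega
  set j : Fin n := ⟨n - k - 1, hj'⟩ with hjdef
  have hcard_gt : (Finset.univ.filter (fun i : Fin n => a j < a i)).card = k := by
    have h1 : Finset.univ.filter (fun i : Fin n => a j < a i) = Finset.Ioi j := by
      ext i; simp [ha.lt_iff_lt]
    rw [h1, Fin.card_Ioi]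
    show n - 1 - (n - k - 1) = k
    omega
  have hcard_ge : (Finset.univ.filter (fun i : Fin n => a j ≤ a i)).card = k + 1 := by
    have h1 : Finset.univ.filter (fun i : Fin n => a j ≤ a i) = Finset.Ici j := by
      ext i; simp [ha.le_iff_le]
    rw [h1, Fin.card_Ici]
    show n - (n - k - 1) = k + 1
    omega
  have hmem : ∀ η : ℝ,
      (((Finset.univ.filter (fun i => η < a i)).card : ℝ) / n ≤ θ) ↔ a j ≤ η := by
    intro η
    constructor
    · intro h
      by_contra hlt
      push_neg at hlt
      have hsub : Finset.univ.filter (fun i : Fin n => a j ≤ a i) ⊆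
          Finset.univ.filter (fun i => η < a i) := by
        intro i hi
        simp only [Finset.mem_filter, Finset.mem_univ, true_and] at hi ⊢
        exact lt_of_lt_of_le hlt hi
      have hge : k + 1 ≤ (Finset.univ.filter (fun i : Fin n => η < a i)).card := by
        rw [← hcard_ge]; exact Finset.card_le_card hsub
      have hge' : ((k:ℝ) + 1) ≤ ((Finset.univ.filter (fun i : Fin n => η < a i)).card : ℝ) := by
        exact_mod_cast hge
      rw [div_le_iff₀ hn'] at h
      nlinarith
    · intro h
      have hsub : Finset.univ.filter (fun i : Fin n => η < a i) ⊆
          Finset.univ.filter (fun i : Fin n => a j < a i) := by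
        intro i hi
        simp only [Finset.mem_filter, Finset.mem_univ, true_and] at hi ⊢
        exact lt_of_le_of_lt h hi
      have hle : (Finset.univ.filter (fun i : Fin n => η < a i)).card ≤ k := by
        rw [← hcard_gt]; exact Finset.card_le_card hsub
      have hle' : ((Finset.univ.filter (fun i : Fin n => η < a i)).card : ℝ) ≤ (k:ℝ) := by
        exact_mod_cast hle
      rw [div_le_iff₀ hn']
      linarith
  have hSeq : {η : ℝ | ((Finset.univ.filter (fun i => η < a i)).card : ℝ) / n ≤ θ}
      = Set.Ici (a j) := Set.ext fun η => hmem η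
  have hQeq : Q = a j := by rw [hQ, hSeq, csInf_Ici]
  have hTail : Finset.univ.filter (fun i : Fin n => Q < a i)
      = Finset.univ.filter (fun i : Fin n => a j < a i) := by rw [hQeq]
  have hTailCard : (Finset.univ.filter (fun i : Fin n => Q < a i)).card = k := by
    rw [hTail]; exact hcard_gt
  have hθn1 : 1 / (θ * (n:ℝ)) = 1 / (k:ℝ) := by rw [hθn]
  -- π* properties
  have hps_nonneg : ∀ i, 0 ≤ πstar i := by
    intro i; rw [hπstar]; dsimp only
    split <;> positivity
  have hps_sum : ∑ i, πstar i = 1 := by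
    rw [hπstar]
    simp only
    rw [← Finset.sum_div, Finset.sum_boole, hTailCard]
    field_simp
  have hps_bd : ∀ i, πstar i ≤ 1 / (θ * n) := by
    intro i; rw [hθn1, hπstar]; dsimp only
    split
    · norm_num
    · rw [zero_div]; positivity
  have hps_val : ∑ i, πstar i * a i
      = (1 / (k : ℝ)) * ∑ i ∈ Finset.univ.filter (fun i : Fin n => Q < a i), a i := by
    rw [hπstar, Finset.mul_sum, Finset.sum_filter]
    apply Finset.sum_congr rfl
    intro i _
    dsimp only
    split <;> ring
  -- upper bound
  have hub : ∀ π : Fin n → ℝ, (∀ i, 0 ≤ π i) → (∑ i, π i = 1) → (∀ i, π i ≤ 1 / (θ * n)) →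
      (∀ i, (π i - πstar i) * (a i - Q) ≤ 0) := by
    intro π hpos hsum hbd i
    by_cases hi : Q < a i
    · have h1 : πstar i = 1 / (k:ℝ) := by rw [hπstar]; simp [hi]
      have h2 : π i ≤ 1 / (k:ℝ) := by rw [← hθn1]; exact hbd i
      nlinarith
    · have h1 : πstar i = 0 := by rw [hπstar]; simp [hi]
      push_neg at hi
      nlinarith [hpos i]
  have hexpand : ∀ π : Fin n → ℝ, (∑ i, π i = 1) →
      ∑ i, (π i - πstar i) * (a i - Q)
        = ∑ i, π i * a i - ∑ i, πstar i * a i := by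
    intro π hsum
    have h1 : ∑ i, (π i - πstar i) * (a i - Q)
        = ∑ i, (π i * a i - πstar i * a i - Q * π i + Q * πstar i) :=
      Finset.sum_congr rfl fun i _ => by ring
    rw [h1]
    simp only [Finset.sum_add_distrib, Finset.sum_sub_distrib, ← Finset.mul_sum]
    rw [hsum, hps_sum]
    ring
  refine ⟨hTailCard, ⟨⟨πstar, hps_nonneg, hps_sum, hps_bd, hps_val.symm⟩, ?_⟩,
    ⟨hps_nonneg, hps_sum, hps_bd, hps_val⟩, ?_⟩
  · rintro x ⟨π, hpos, hsum, hbd, rfl⟩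
    have h1 : ∑ i, (π i - πstar i) * (a i - Q) ≤ 0 :=
      Finset.sum_nonpos fun i _ => hub π hpos hsum hbd i
    rw [hexpand π hsum, hps_val] at h1
    linarith
  · intro π hpos hsum hbd hval
    have h0 : ∑ i, (π i - πstar i) * (a i - Q) = 0 := by
      rw [hexpand π hsum, hps_val, hval]; ring
    have hall : ∀ i ∈ Finset.univ, (π i - πstar i) * (a i - Q) = 0 :=
      (Finset.sum_eq_zero_iff_of_nonpos fun i _ => hub π hpos hsum hbd i).mp h0
    have hne : ∀ i, a i ≠ Q → π i = πstar i := by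
      intro i hi
      have := hall i (Finset.mem_univ i)
      rcases mul_eq_zero.mp this with h | h
      · linarith [sub_eq_zero.mp h]
      · exact absurd (by linarith [sub_eq_zero.mp h] : a i = Q) hi
    have hij : ∀ i : Fin n, a i = Q → i = j := by
      intro i hi
      exact ha.injective (by rw [hi, hQeq])
    have hπj : π j = πstar j := by
      have h1 : π j + ∑ i ∈ Finset.univ.erase j, π i = 1 := by
        rw [Finset.add_sum_erase _ π (Finset.mem_univ j)]; exact hsum
      have h2 : πstar j + ∑ i ∈ Finset.univ.erase j, πstar i = 1 := by
        rw [Finset.add_sum_erase _ πstar (Finset.mem_univ j)]; exact hps_sum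
      have h3 : ∑ i ∈ Finset.univ.erase j, π i = ∑ i ∈ Finset.univ.erase j, πstar i := by
        apply Finset.sum_congr rfl
        intro i hi
        apply hne
        intro hcon
        exact (Finset.mem_erase.mp hi).1 (hij i hcon)
      linarith
    funext i
    by_cases hi : a i = Q
    · rw [hij i hi]; exact hπj
    · exact hne i hi
end
end

section
/- Let n be a positive integer, θ ∈ (0,1) such that θn is NOT an integer, B > 0, and a ∈ ℝ^n with 0 ≤ a_1 < a_2 < ⋯ < a_n ≤ B. Set i* = n − ⌊θn⌋ and let Â = (1/(⌊θn⌋+1)) ∑_{i=i*}^n a_i be the average of the entries a_i with a_i ≥ a_{i*}. Then 0 ≤ max_{π∈P_θ} ∑_{i=1}^n π_i a_i − Â ≤ B/(θn). -/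
/-!
Let `t = a_{i*}` be the threshold entry. Against `t`, any `π ∈ P_θ` gains at most
`1/(θn)` times the excess `a_i - t` of each top entry and loses on the others, so the
superquantile is at most `t + (1/(θn)) D` with `D = ∑_{i ≥ i*} (a_i - t)`. The uniform
distribution on the `⌊θn⌋ + 1` top entries lies in `P_θ` and attains `Â = t + D/(⌊θn⌋ + 1)`.
The gap is therefore at most `(1/(θn) - 1/(⌊θn⌋ + 1)) D`, and since `D ≤ (⌊θn⌋ + 1) B` and
`⌊θn⌋ ≤ θn` this is at most `B/(θn)`.
-/

open scoped BigOperators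

noncomputable section

/-- With `c = 1/(θn)` this is `{∑ i, π i * a i | π ∈ P_θ}`, whose supremum is the superquantile. -/
def cappedMeans {ι : Type*} [Fintype ι] (a : ι → ℝ) (c : ℝ) : Set ℝ :=
  {x | ∃ π : ι → ℝ, (∀ i, 0 ≤ π i) ∧ (∑ i, π i = 1) ∧ (∀ i, π i ≤ c) ∧ x = ∑ i, π i * a i}

section CappedMeans

open Finset

variable {ι : Type*} [Fintype ι] [DecidableEq ι] {a : ι → ℝ} {c t : ℝ} {T : Finset ι}

theorem sum_mul_le_add_cap_mul_sum_sub {π : ι → ℝ} (hπ0 : ∀ i, 0 ≤ π i) (hπ1 : ∑ i, π i = 1)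
    (hπc : ∀ i, π i ≤ c) (hlo : ∀ i ∈ T, t ≤ a i) (hhi : ∀ i ∉ T, a i ≤ t) :
    ∑ i, π i * a i ≤ t + c * ∑ i ∈ T, (a i - t) := by
  have hshift : ∑ i, π i * a i = t + ∑ i, π i * (a i - t) := by
    simp only [mul_sub, sum_sub_distrib, ← sum_mul, hπ1, one_mul, add_sub_cancel]
  have hterm (i : ι) : π i * (a i - t) ≤ if i ∈ T then c * (a i - t) else 0 := by
    split_ifs with hi
    · exact mul_le_mul_of_nonneg_right (hπc i) (sub_nonneg.2 (hlo i hi))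
    · exact mul_nonpos_of_nonneg_of_nonpos (hπ0 i) (sub_nonpos.2 (hhi i hi))
  calc ∑ i, π i * a i = t + ∑ i, π i * (a i - t) := hshift
    _ ≤ t + ∑ i, if i ∈ T then c * (a i - t) else 0 := by gcongr with i; exact hterm i
    _ = t + c * ∑ i ∈ T, (a i - t) := by rw [sum_ite_mem, univ_inter, mul_sum]

theorem average_mem_cappedMeans (hT : T.Nonempty) (hc : 1 / (#T : ℝ) ≤ c) :
    1 / (#T : ℝ) * ∑ i ∈ T, a i ∈ cappedMeans a c := by
  have hcard : (0 : ℝ) < #T := by exact_mod_cast hT.card_pos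
  refine ⟨fun i => if i ∈ T then 1 / #T else 0, fun i => ?_, ?_, fun i => ?_, ?_⟩
  · dsimp only
    split_ifs <;> positivity
  · rw [sum_ite_mem, univ_inter, sum_const, nsmul_eq_mul]
    field_simp
  · dsimp only
    split_ifs
    exacts [hc, (by positivity : (0 : ℝ) ≤ 1 / #T).trans hc]
  · simp only [ite_mul, zero_mul]
    rw [sum_ite_mem, univ_inter, ← mul_sum]

theorem average_le_sSup_cappedMeans_and_sub_le (hT : T.Nonempty) (hc : 1 / (#T : ℝ) ≤ c)
    {M : ℝ} (hlo : ∀ i ∈ T, t ≤ a i) (hhi : ∀ i ∉ T, a i ≤ t) (hM : ∀ i ∈ T, a i - t ≤ M) :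
    1 / (#T : ℝ) * ∑ i ∈ T, a i ≤ sSup (cappedMeans a c) ∧
      sSup (cappedMeans a c) - 1 / (#T : ℝ) * ∑ i ∈ T, a i ≤ (c * #T - 1) * M := by
  set D := ∑ i ∈ T, (a i - t)
  have hcard : (0 : ℝ) < #T := by exact_mod_cast hT.card_pos
  have hmem := average_mem_cappedMeans (a := a) hT hc
  have hupper : ∀ x ∈ cappedMeans a c, x ≤ t + c * D := by
    rintro x ⟨π, hπ0, hπ1, hπc, rfl⟩
    exact sum_mul_le_add_cap_mul_sum_sub hπ0 hπ1 hπc hlo hhi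
  have havg : 1 / (#T : ℝ) * ∑ i ∈ T, a i = t + 1 / #T * D := by
    simp only [D, sum_sub_distrib, sum_const, nsmul_eq_mul]
    field_simp
    ring
  have hD : D ≤ #T * M := by
    simpa only [sum_const, nsmul_eq_mul] using sum_le_sum hM
  refine ⟨le_csSup ⟨t + c * D, hupper⟩ hmem, ?_⟩
  have hsSup : sSup (cappedMeans a c) ≤ t + c * D := csSup_le ⟨_, hmem⟩ hupper
  calc sSup (cappedMeans a c) - 1 / (#T : ℝ) * ∑ i ∈ T, a i
      ≤ (c - 1 / #T) * D := by rw [havg]; linarith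
    _ ≤ (c - 1 / #T) * (#T * M) := mul_le_mul_of_nonneg_left hD (sub_nonneg.2 hc)
    _ = (c * #T - 1) * M := by field_simp

end CappedMeans

theorem Monotone.average_Ici_le_sSup_cappedMeans_and_sub_le {ι : Type*} [Fintype ι]
    [LinearOrder ι] [LocallyFiniteOrderTop ι] {a : ι → ℝ} (ha : Monotone a) (j : ι) {c M : ℝ}
    (hc : 1 / ((Finset.Ici j).card : ℝ) ≤ c) (hM : ∀ i, a i - a j ≤ M) :
    1 / ((Finset.Ici j).card : ℝ) * ∑ i ∈ Finset.Ici j, a i ≤ sSup (cappedMeans a c) ∧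
      sSup (cappedMeans a c) - 1 / ((Finset.Ici j).card : ℝ) * ∑ i ∈ Finset.Ici j, a i ≤
        (c * (Finset.Ici j).card - 1) * M :=
  average_le_sSup_cappedMeans_and_sub_le ⟨j, Finset.mem_Ici.2 le_rfl⟩ hc
    (fun _ hi => ha (Finset.mem_Ici.1 hi))
    (fun _ hi => ha (not_le.1 (by simpa using hi)).le) (fun i _ => hM i)

/-- When `θn` is not an integer, the hard-threshold tail average `Â` (over the `⌊θn⌋ + 1`
largest entries, i.e. 1-indexed entries `i* = n - ⌊θn⌋` through `n`) underestimates the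
superquantile `max_{π ∈ P_θ} ∑ π i a i` by at most `B/(θn)`. -/
theorem superquantile_hard_threshold_gap
    (n : ℕ) (hn : 0 < n) (θ : ℝ) (hθ : θ ∈ Set.Ioo (0:ℝ) 1)
    (B : ℝ)
    (a : Fin n → ℝ) (ha : StrictMono a)
    (ha0 : 0 ≤ a ⟨0, hn⟩) (haB : a ⟨n - 1, by omega⟩ ≤ B) :
    ∀ Ahat : ℝ,
      Ahat = (1 / ((⌊θ * (n : ℝ)⌋₊ : ℝ) + 1)) *
        ∑ i ∈ Finset.univ.filter (fun i : Fin n => n - ⌊θ * (n : ℝ)⌋₊ - 1 ≤ (i : ℕ)), a i →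
      0 ≤ sSup {x : ℝ | ∃ π : Fin n → ℝ, (∀ i, 0 ≤ π i) ∧ (∑ i, π i = 1) ∧
          (∀ i, π i ≤ 1 / (θ * n)) ∧ x = ∑ i, π i * a i} - Ahat ∧
      sSup {x : ℝ | ∃ π : Fin n → ℝ, (∀ i, 0 ≤ π i) ∧ (∑ i, π i = 1) ∧
          (∀ i, π i ≤ 1 / (θ * n)) ∧ x = ∑ i, π i * a i} - Ahat ≤ B / (θ * n) := by
  rintro Ahat rfl
  obtain ⟨hθ0, hθ1⟩ := hθ
  set m := ⌊θ * (n : ℝ)⌋₊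
  have hθn : 0 < θ * n := by positivity
  have hm : (m : ℝ) ≤ θ * n := Nat.floor_le hθn.le
  have hmn : m < n := by exact_mod_cast hm.trans_lt (by nlinarith : θ * n < n)
  set j : Fin n := ⟨n - m - 1, by omega⟩
  have hT : Finset.univ.filter (fun i : Fin n => n - m - 1 ≤ (i : ℕ)) = Finset.Ici j := by
    ext i; simp [j, Fin.le_def]
  have hcard : ((Finset.Ici j).card : ℝ) = m + 1 := by
    rw [Fin.card_Ici, show n - (n - m - 1) = m + 1 by omega]; push_cast; rfl
  have hmax (i : Fin n) : a i ≤ B := (ha.monotone (Fin.le_def.2 (by dsimp; omega))).trans haB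
  have hmin : 0 ≤ a j := ha0.trans (ha.monotone (Fin.le_def.2 (Nat.zero_le _)))
  obtain ⟨hle, hgap⟩ := ha.monotone.average_Ici_le_sSup_cappedMeans_and_sub_le j
    (hcard ▸ one_div_le_one_div_of_le hθn (Nat.lt_floor_add_one _).le)
    (fun i => by linarith [hmax i] : ∀ i, a i - a j ≤ B)
  change 0 ≤ sSup (cappedMeans a (1 / (θ * n))) - _ ∧ sSup (cappedMeans a (1 / (θ * n))) - _ ≤ _
  rw [hT, ← hcard]
  refine ⟨sub_nonneg.2 hle, hgap.trans ?_⟩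
  have hB : 0 ≤ B := hmin.trans (hmax j)
  rw [hcard]
  calc (1 / (θ * n) * (m + 1) - 1) * B ≤ 1 / (θ * n) * B := by
        gcongr
        field_simp
        linarith
    _ = B / (θ * n) := by ring
end
end

section
/- Let n ≥ 1 clients hold losses ℓ_1,…,ℓ_n ∈ [0,B], let b ≥ 2 be a power of 2 with bin edges 0 = l_0 < l_1 < ⋯ < l_b = B, and for each client i and each node of the dyadic tree over the b bins (levels r = 0,…,log₂b − 1, indices j = 1,…,b/2^r) let x_i(r,j) ∈ {0,1} indicate that ℓ_i lies in the j-th block of 2^r consecutive bins. Let ξ_i(r,j) be i.i.d. discrete Gaussian N_ℤ(0,σ²) random variables with σ ≥ 1/2, let c be a positive integer, and let the server compute s(r,j) = (∑_{i=1}^n (c·x_i(r,j) + ξ_i(r,j))) mod M and ĥ = s/c, where the representative of the residue is taken in (−M/2, M/2]. Define the cumulative sums Ĥ(j) = ∑_{(r,o)∈P_j} ĥ(r,o) and H(j) = ∑_{(r,o)∈P_j} h(r,o) (h = ∑_i x_i the true counts), where P_j is the maximal dyadic partition of the range [1,j], and define j*_θ(Ĥ) = argmin_{j∈[b]} |Ĥ(j)/n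 − (1−θ)|, R*_θ(Ĥ) = min_{j∈[b]} |Ĥ(j)/n − (1−θ)|, and the quantile error Δ_θ(Ĥ,H) = |H(j*_θ(Ĥ))/n − (1−θ)|. Fix δ > 0 and assume M ≥ 2 + 2cn + 2n√(2σ² log(16nb/δ)). Then with probability at least 1 − δ, Δ_θ(Ĥ,H) ≤ R*_θ(Ĥ) + √((4σ²/(c²n)) · log₂b · log(4b/δ)). -/
/-!
Once the noise is moderate the claim is deterministic. If at every node of the dyadic tree the
client sum `∑ᵢ ξᵢ(r,o)` stays below `n τ` with `τ = √(2σ² log(16nb/δ))`, the condition on `M`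
rules out any wrap-around of the balanced reduction, so `Ĥ(j) − H(j)` is exactly the noise
accumulated over the nodes of `P_j`, divided by `c`. If moreover each of these `b` accumulated sums,
a sum of at most `n log₂ b` independent noise terms, stays below `√(4 n log₂ b σ² log(4b/δ))`, then
`|H(j)/n − Ĥ(j)/n|` is at most the claimed radius for every `j`, and the triangle inequality through
`Ĥ(j*)/n` concludes. The discrete Gaussian `N_ℤ(0, σ²)` is `σ²`-sub-Gaussian (Poisson summation
bounds its moment generating function by that of `N(0, σ²)`), so Hoeffding's inequality and union
bounds over the fewer than `2b` tree nodes and over the `b` prefixes show that each of the two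
conditions fails with probability at most `δ/2`.
-/

open MeasureTheory ProbabilityTheory
open scoped NNReal

open Real Complex in
lemma summable_exp_neg_quadratic_int {a : ℝ} (ha : 0 < a) (b : ℝ) :
    Summable fun n : ℤ => rexp (-π * a * n ^ 2 + 2 * π * b * n) := by
  refine ((summable_jacobiTheta₂_term_iff (-I * b) (I * a)).2 (by simpa using ha)).norm.congr
    fun n => ?_
  rw [norm_jacobiTheta₂_term]
  congr 1
  simp only [mul_im, I_re, I_im, ofReal_re, ofReal_im, neg_re, neg_im]
  ring

open Real Complex in
/-- Take norms in the Poisson summation formula `Complex.tsum_exp_neg_quadratic`: the shift `b`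
only costs the factor `exp (π b² / a)`. -/
lemma tsum_exp_neg_quadratic_int_le {a : ℝ} (ha : 0 < a) (b : ℝ) :
    ∑' n : ℤ, rexp (-π * a * n ^ 2 + 2 * π * b * n)
      ≤ rexp (π * b ^ 2 / a) * ∑' n : ℤ, rexp (-π * a * n ^ 2) := by
  have hnorm (n : ℤ) : ‖cexp (-π / a * (n + I * b) ^ 2)‖
      = rexp (π * b ^ 2 / a) * rexp (-π / a * n ^ 2) := by
    have : (-π / a * (n + I * b) ^ 2 : ℂ) = ((-π / a * (n ^ 2 - b ^ 2) : ℝ) : ℂ)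
        + ((-π / a * (2 * n * b) : ℝ) : ℂ) * I := by
      push_cast; ring_nf; rw [I_sq]; ring
    rw [Complex.norm_exp, ← Real.exp_add, this, add_re, ofReal_re, re_ofReal_mul, I_re, mul_zero,
      add_zero]
    ring_nf
  have hsum : Summable fun n : ℤ => ‖cexp (-π / a * (n + I * b) ^ 2)‖ := by
    simp_rw [hnorm]
    refine Summable.mul_left _ ((summable_exp_neg_quadratic_int (inv_pos.2 ha) 0).congr ?_)
    intro n; ring_nf
  calc ∑' n : ℤ, rexp (-π * a * n ^ 2 + 2 * π * b * n)
      = ‖∑' n : ℤ, cexp (-π * a * n ^ 2 + 2 * π * b * n)‖ := by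
        rw [← Real.norm_of_nonneg (tsum_nonneg fun n => (Real.exp_pos _).le)]
        push_cast [← Complex.norm_real, Complex.ofReal_tsum]
        rfl
    _ ≤ 1 / a ^ (1 / 2 : ℝ) * ∑' n : ℤ, ‖cexp (-π / a * (n + I * b) ^ 2)‖ := by
        rw [Complex.tsum_exp_neg_quadratic (by simpa using ha), norm_mul, norm_div, norm_one,
          norm_cpow_eq_rpow_re_of_pos ha, show ((1 : ℂ) / 2).re = 1 / 2 by simp]
        gcongr
        exact norm_tsum_le_tsum_norm hsum
    _ = rexp (π * b ^ 2 / a) * ∑' n : ℤ, rexp (-π * a * n ^ 2) := by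
        rw [tsum_congr hnorm, tsum_mul_left, Real.tsum_exp_neg_mul_int_sq ha]
        ring

open Real in
lemma exp_mul_sub_sq_div_eq {σ : ℝ} (hσ : σ ≠ 0) (t : ℝ) (k : ℤ) :
    rexp (t * k - k ^ 2 / (2 * σ ^ 2))
      = rexp (-π * (1 / (2 * π * σ ^ 2)) * k ^ 2 + 2 * π * (t / (2 * π)) * k) := by
  congr 1; field_simp; ring

lemma summable_exp_mul_sub_sq_div {σ : ℝ} (hσ : σ ≠ 0) (t : ℝ) :
    Summable fun k : ℤ => Real.exp (t * k - k ^ 2 / (2 * σ ^ 2)) := by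
  simp_rw [exp_mul_sub_sq_div_eq hσ]
  exact summable_exp_neg_quadratic_int (by positivity) _

open Real in
lemma tsum_exp_mul_sub_sq_div_le {σ : ℝ} (hσ : σ ≠ 0) (t : ℝ) :
    ∑' k : ℤ, rexp (t * k - k ^ 2 / (2 * σ ^ 2))
      ≤ rexp (σ ^ 2 * t ^ 2 / 2) * ∑' k : ℤ, rexp (-k ^ 2 / (2 * σ ^ 2)) := by
  have h := tsum_exp_neg_quadratic_int_le (a := 1 / (2 * π * σ ^ 2)) (by positivity) (t / (2 * π))
  simp_rw [← exp_mul_sub_sq_div_eq hσ] at h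
  convert h using 3 <;> field_simp

lemma integrable_of_summable_measureReal_singleton {α : Type*} [MeasurableSpace α] [Countable α]
    [MeasurableSingletonClass α] {ν : Measure α} [IsFiniteMeasure ν] {f : α → ℝ}
    (hf : Summable fun a => ν.real {a} * ‖f a‖) : Integrable f ν := by
  rw [← Measure.sum_smul_dirac ν]
  exact integrable_sum_dirac (fun a => measure_ne_top ν _) hf

lemma tsum_measureReal_singleton {α : Type*} [MeasurableSpace α] [Countable α]
    [MeasurableSingletonClass α] (ν : Measure α) [IsProbabilityMeasure ν] :
    ∑' a, ν.real {a} = 1 := by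
  have h := congrArg (· Set.univ) (Measure.sum_smul_dirac ν)
  simp only [Measure.sum_apply _ MeasurableSet.univ, Measure.smul_apply, measure_univ,
    smul_eq_mul, mul_one] at h
  simp only [measureReal_def]
  rw [← ENNReal.tsum_toReal_eq (fun a => measure_ne_top ν _), h, ENNReal.toReal_one]

open Real in
lemma hasSubgaussianMGF_intCast_of_measure_singleton {ν : Measure ℤ} [IsProbabilityMeasure ν]
    {σ C : ℝ} (hσ : σ ≠ 0)
    (hν : ∀ k : ℤ, ν {k} = ENNReal.ofReal (C * rexp (-(k : ℝ) ^ 2 / (2 * σ ^ 2)))) :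
    HasSubgaussianMGF (fun k : ℤ => (k : ℝ)) (σ ^ 2).toNNReal ν := by
  have hC : 0 ≤ C := by
    by_contra! hC
    have h := tsum_measureReal_singleton ν
    simp only [measureReal_def, hν, ENNReal.toReal_ofReal', max_eq_right
      (mul_nonpos_of_nonpos_of_nonneg hC.le (Real.exp_pos _).le), tsum_zero] at h
    exact zero_ne_one h
  have hmass (k : ℤ) : ν.real {k} = C * rexp (-k ^ 2 / (2 * σ ^ 2)) := by
    rw [measureReal_def, hν, ENNReal.toReal_ofReal (by positivity)]
  have hterm (t : ℝ) (k : ℤ) :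
      ν.real {k} * rexp (t * k) = C * rexp (t * k - k ^ 2 / (2 * σ ^ 2)) := by
    rw [hmass, mul_assoc, ← Real.exp_add]
    ring_nf
  have hint (t : ℝ) : Integrable (fun k : ℤ => rexp (t * k)) ν := by
    refine integrable_of_summable_measureReal_singleton ?_
    simp_rw [Real.norm_of_nonneg (Real.exp_pos _).le, hterm t]
    exact (summable_exp_mul_sub_sq_div hσ t).mul_left C
  refine ⟨hint, fun t => ?_⟩
  calc mgf (fun k : ℤ => (k : ℝ)) ν t
      = C * ∑' k : ℤ, rexp (t * k - k ^ 2 / (2 * σ ^ 2)) := by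
        rw [mgf, integral_countable (hint t), ← tsum_mul_left]
        simp_rw [smul_eq_mul, hterm t]
    _ ≤ C * (rexp (σ ^ 2 * t ^ 2 / 2) * ∑' k : ℤ, rexp (-k ^ 2 / (2 * σ ^ 2))) := by
        gcongr
        exact tsum_exp_mul_sub_sq_div_le hσ t
    _ = rexp (σ ^ 2 * t ^ 2 / 2) * ∑' k : ℤ, ν.real {k} := by
        simp_rw [hmass, tsum_mul_left]
        ring
    _ = _ := by rw [tsum_measureReal_singleton, mul_one, Real.coe_toNNReal _ (sq_nonneg σ)]

namespace ProbabilityTheory.HasSubgaussianMGF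

variable {Ω : Type*} [MeasurableSpace Ω] {μ : Measure Ω} {X : Ω → ℝ} {c d : ℝ≥0}

lemma of_le (h : HasSubgaussianMGF X c μ) (hcd : c ≤ d) : HasSubgaussianMGF X d μ :=
  ⟨h.integrable_exp_mul, fun t => (h.mgf_le t).trans <| Real.exp_le_exp.2 <| by gcongr⟩

lemma measureReal_le_abs_le (h : HasSubgaussianMGF X c μ) {ε : ℝ}
    (hε : 0 ≤ ε) : μ.real {ω | ε ≤ |X ω|} ≤ 2 * Real.exp (-ε ^ 2 / (2 * c)) := by
  have hsplit : {ω | ε ≤ |X ω|} = {ω | ε ≤ X ω} ∪ {ω | ε ≤ (-X) ω} := by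
    ext ω
    simp only [Set.mem_ofPred_eq, Set.mem_union, Pi.neg_apply, le_abs, le_neg]
  calc μ.real {ω | ε ≤ |X ω|}
      ≤ μ.real {ω | ε ≤ X ω} + μ.real {ω | ε ≤ (-X) ω} := hsplit ▸ measureReal_union_le _ _
    _ ≤ Real.exp (-ε ^ 2 / (2 * c)) + Real.exp (-ε ^ 2 / (2 * c)) :=
        add_le_add (h.measure_ge_le hε) (h.neg.measure_ge_le hε)
    _ = 2 * Real.exp (-ε ^ 2 / (2 * c)) := (two_mul _).symm

end ProbabilityTheory.HasSubgaussianMGF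

def dyadicNodes (q : ℕ) : Finset (ℕ × ℕ) :=
  (Finset.range q).biUnion fun r => {r} ×ˢ Finset.Icc 1 (2 ^ (q - r))

lemma mem_dyadicNodes {q : ℕ} {p : ℕ × ℕ} :
    p ∈ dyadicNodes q ↔ p.1 < q ∧ 1 ≤ p.2 ∧ p.2 ≤ 2 ^ (q - p.1) := by
  obtain ⟨r, o⟩ := p
  simp [dyadicNodes, and_assoc]

lemma card_dyadicNodes_le (q : ℕ) : (dyadicNodes q).card ≤ 2 ^ (q + 1) := by
  calc (dyadicNodes q).card ≤ ∑ r ∈ Finset.range q, 2 ^ (q - r) := by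
        refine Finset.card_biUnion_le.trans (Finset.sum_le_sum fun r _ => ?_)
        simp
    _ = ∑ r ∈ Finset.range q, 2 ^ r * 2 := by
        rw [← Finset.sum_range_reflect]
        refine Finset.sum_congr rfl fun r hr => ?_
        rw [Finset.mem_range] at hr
        rw [← pow_succ]
        congr 1; omega
    _ ≤ 2 ^ (q + 1) := by
        rw [← Finset.sum_mul, pow_succ]
        exact Nat.mul_le_mul_right 2 (Nat.geomSum_lt le_rfl fun k hk => Finset.mem_range.1 hk).le

structure IsDiscreteGaussianNoise {Ω ι : Type*} [MeasurableSpace Ω] (P : Measure Ω)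
    (ξ : ι → Ω → ℤ) (σ C : ℝ) : Prop where
  measurable : ∀ i, Measurable (ξ i)
  indep : iIndepFun ξ P
  law : ∀ i (k : ℤ), P {ω | ξ i ω = k} = ENNReal.ofReal (C * Real.exp (-(k : ℝ) ^ 2 / (2 * σ ^ 2)))

section Noise

variable {Ω ι : Type*} [MeasurableSpace Ω] {P : Measure Ω} [IsProbabilityMeasure P] {σ C : ℝ}

lemma IsDiscreteGaussianNoise.measureReal_le_abs_sum_le {ξ : ι → Ω → ℤ}
    (hξ : IsDiscreteGaussianNoise P ξ σ C) (hσ : σ ≠ 0) {s : Finset ι} {m : ℕ} (hs : s.card ≤ m)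
    {ε : ℝ} (hε : 0 ≤ ε) :
    P.real {ω | ε ≤ |∑ i ∈ s, (ξ i ω : ℝ)|} ≤ 2 * Real.exp (-ε ^ 2 / (2 * (m * σ ^ 2))) := by
  have hsub (i : ι) : HasSubgaussianMGF (fun ω => (ξ i ω : ℝ)) (σ ^ 2).toNNReal P := by
    have := Measure.isProbabilityMeasure_map (μ := P) (hξ.measurable i).aemeasurable
    refine HasSubgaussianMGF.of_map (hξ.measurable i).aemeasurable
      (hasSubgaussianMGF_intCast_of_measure_singleton (C := C) hσ fun k => ?_)
    rw [Measure.map_apply (hξ.measurable i) (measurableSet_singleton k)]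
    exact hξ.law i k
  have hsum := HasSubgaussianMGF.sum_of_iIndepFun (s := s)
    (hξ.indep.comp (fun _ k => (k : ℝ)) fun _ => measurable_from_top) fun i _ => hsub i
  have hle : ∑ _i ∈ s, (σ ^ 2).toNNReal ≤ m * (σ ^ 2).toNNReal := by
    rw [Finset.sum_const, nsmul_eq_mul]
    gcongr
  have h := (hsum.of_le hle).measureReal_le_abs_le hε
  rwa [NNReal.coe_mul, NNReal.coe_natCast, Real.coe_toNNReal _ (sq_nonneg σ)] at h

lemma IsDiscreteGaussianNoise.measureReal_biUnion_le_abs_sum_sum_le {n : ℕ}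
    {ξ : Fin n → ι → Ω → ℤ} (hξ : IsDiscreteGaussianNoise P (fun ip : Fin n × ι => ξ ip.1 ip.2) σ C)
    (hσ : σ ≠ 0) {J : Type*} (s : Finset J) (T : J → Finset ι) {m : ℕ}
    (hT : ∀ j ∈ s, (T j).card ≤ m) {ε : ℝ} (hε : 0 ≤ ε) :
    P.real (⋃ j ∈ s, {ω | ε ≤ |∑ p ∈ T j, ∑ i, (ξ i p ω : ℝ)|})
      ≤ s.card * (2 * Real.exp (-ε ^ 2 / (2 * (n * m * σ ^ 2)))) := by
  refine (measureReal_biUnion_finset_le _ _).trans ?_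
  rw [← nsmul_eq_mul, ← Finset.sum_const]
  refine Finset.sum_le_sum fun j hj => ?_
  have h := hξ.measureReal_le_abs_sum_le hσ (s := Finset.univ ×ˢ T j) (m := n * m)
    (by rw [Finset.card_product, Finset.card_univ, Fintype.card_fin]
        exact Nat.mul_le_mul_left _ (hT j hj)) hε
  simpa only [Finset.sum_product_right, Nat.cast_mul] using h

lemma IsDiscreteGaussianNoise.measureReal_node_noise_ge_le {n q b : ℕ}
    {ξ : Fin n → ℕ × ℕ → Ω → ℤ}
    (hξ : IsDiscreteGaussianNoise P (fun ip : Fin n × (ℕ × ℕ) => ξ ip.1 ip.2) σ C) (hσ : σ ≠ 0)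
    (hn : 1 ≤ n) (hb : 2 ^ q ≤ b) {δ : ℝ} (hδ : 0 < δ) (hδ1 : δ < 1) :
    P.real (⋃ p ∈ dyadicNodes q, {ω | n * √(2 * σ ^ 2 * Real.log (16 * n * b / δ))
      ≤ |∑ i, (ξ i p ω : ℝ)|}) ≤ δ / 2 := by
  have hn1 : (1 : ℝ) ≤ n := by exact_mod_cast hn
  have hb1 : (2 : ℝ) ^ q ≤ b := by exact_mod_cast hb
  have hb0 : (0 : ℝ) < b := lt_of_lt_of_le (by positivity) hb1
  have hL : 0 < Real.log (16 * n * b / δ) := Real.log_pos <| by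
    rw [lt_div_iff₀ hδ]; nlinarith [one_le_pow₀ (M₀ := ℝ) (a := 2) one_le_two (n := q)]
  have hexp : Real.exp (-(n * √(2 * σ ^ 2 * Real.log (16 * n * b / δ))) ^ 2
      / (2 * (n * (1 : ℕ) * σ ^ 2))) ≤ δ / (16 * n * b) := by
    rw [mul_pow, Real.sq_sqrt (by positivity), Nat.cast_one, mul_one]
    calc _ = Real.exp (-(n * Real.log (16 * n * b / δ))) := by congr 1; field_simp
      _ ≤ Real.exp (-Real.log (16 * n * b / δ)) := Real.exp_le_exp.2 <| by nlinarith
      _ = δ / (16 * n * b) := by rw [Real.exp_neg, Real.exp_log (by positivity), inv_div]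
  have hcard : ((dyadicNodes q).card : ℝ) ≤ 2 * b := by
    calc ((dyadicNodes q).card : ℝ) ≤ 2 ^ (q + 1) := by exact_mod_cast card_dyadicNodes_le q
      _ ≤ 2 * b := by rw [pow_succ']; gcongr
  have h := hξ.measureReal_biUnion_le_abs_sum_sum_le hσ (dyadicNodes q) (fun p => {p}) (m := 1)
    (fun _ _ => le_rfl) (by positivity : 0 ≤ n * √(2 * σ ^ 2 * Real.log (16 * n * b / δ)))
  simp only [Finset.sum_singleton] at h
  calc _ ≤ _ := h
    _ ≤ 2 * b * (2 * (δ / (16 * n * b))) := by gcongr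
    _ = δ / (4 * n) := by field_simp; ring
    _ ≤ δ / 2 := div_le_div_of_nonneg_left hδ.le two_pos (by linarith)

lemma IsDiscreteGaussianNoise.measureReal_prefix_noise_ge_le {n q b c : ℕ}
    {ξ : Fin n → ι → Ω → ℤ} (hξ : IsDiscreteGaussianNoise P (fun ip : Fin n × ι => ξ ip.1 ip.2) σ C)
    (hσ : σ ≠ 0) (T : Fin b → Finset ι) (hT : ∀ j, (T j).card ≤ q) (hn : 1 ≤ n) (hq : 1 ≤ q)
    (hb : 1 ≤ b) (hc : 0 < c) {δ : ℝ} (hδ : 0 < δ) (hδ1 : δ < 1) :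
    P.real (⋃ j ∈ Finset.univ, {ω | c * (n * √(4 * σ ^ 2 / ((c : ℝ) ^ 2 * n) * q
      * Real.log (4 * b / δ))) ≤ |∑ p ∈ T j, ∑ i, (ξ i p ω : ℝ)|}) ≤ δ / 2 := by
  have hb1 : (1 : ℝ) ≤ b := by exact_mod_cast hb
  have hL : 0 < Real.log (4 * b / δ) := Real.log_pos <| by rw [lt_div_iff₀ hδ]; nlinarith
  have hexponent : -(c * (n * √(4 * σ ^ 2 / ((c : ℝ) ^ 2 * n) * q * Real.log (4 * b / δ)))) ^ 2
      / (2 * (n * q * σ ^ 2)) = Real.log (δ / (4 * b)) * 2 := by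
    have hn' : (n : ℝ) ≠ 0 := by positivity
    have hq' : (q : ℝ) ≠ 0 := by positivity
    have hc' : (c : ℝ) ≠ 0 := by positivity
    rw [mul_pow, mul_pow, Real.sq_sqrt (by positivity), ← inv_div δ, Real.log_inv]
    field_simp
    ring
  refine (hξ.measureReal_biUnion_le_abs_sum_sum_le hσ _ _ (fun j _ => hT j)
    (by positivity)).trans ?_
  rw [Finset.card_univ, Fintype.card_fin, hexponent, Real.exp_mul,
    Real.exp_log (by positivity), Real.rpow_two]
  calc (b : ℝ) * (2 * (δ / (4 * b)) ^ 2) = δ / 2 * (δ / (4 * b)) := by field_simp; ring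
    _ ≤ δ / 2 := by
      refine mul_le_of_le_one_right (by positivity) ((div_le_one (by positivity)).2 ?_)
      linarith

end Noise

lemma Int.bmod_eq_self_of_two_mul_abs_lt {v : ℤ} {M : ℕ} (h : 2 * |v| < M) : v.bmod M = v := by
  have := neg_abs_le v
  have := le_abs_self v
  exact Int.bmod_eq_of_le_mul_two (by omega) (by omega)

lemma bmod_sum_mul_add_eq {n c M : ℕ} {x e : Fin n → ℤ} (hx : ∀ i, |x i| ≤ 1) {τ : ℝ}
    (hM : 2 + 2 * (c : ℝ) * n + 2 * n * τ ≤ M) (he : |∑ i, (e i : ℝ)| < n * τ) :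
    (∑ i, (c * x i + e i)).bmod M = c * ∑ i, x i + ∑ i, e i := by
  rw [Finset.sum_add_distrib, ← Finset.mul_sum]
  refine Int.bmod_eq_self_of_two_mul_abs_lt ?_
  have hcount : |∑ i, x i| ≤ n := (Finset.abs_sum_le_sum_abs _ _).trans <| by
    simpa using Finset.sum_le_sum fun i (_ : i ∈ Finset.univ) => hx i
  have hcount' : |((∑ i, x i : ℤ) : ℝ)| ≤ n := by exact_mod_cast hcount
  have h2 : 2 * |(c : ℝ) * ((∑ i, x i : ℤ) : ℝ) + ∑ i, (e i : ℝ)| < M := by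
    calc 2 * |(c : ℝ) * ((∑ i, x i : ℤ) : ℝ) + ∑ i, (e i : ℝ)|
        ≤ 2 * (|(c : ℝ) * ((∑ i, x i : ℤ) : ℝ)| + |∑ i, (e i : ℝ)|) := by
          gcongr; exact abs_add_le _ _
      _ ≤ 2 * (c * n + |∑ i, (e i : ℝ)|) := by
          rw [abs_mul, Nat.abs_cast]; gcongr
      _ < M := by linarith
  exact_mod_cast h2

lemma abs_sum_sub_sum_bmod_div_lt {ι : Type*} {n c M : ℕ} (hc : 0 < c) {x e : Fin n → ι → ℤ}
    (hx : ∀ i p, |x i p| ≤ 1) {t : Finset ι} {τ ε : ℝ}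
    (hM : 2 + 2 * (c : ℝ) * n + 2 * n * τ ≤ M) (hnode : ∀ p ∈ t, |∑ i, (e i p : ℝ)| < n * τ)
    (hcum : |∑ p ∈ t, ∑ i, (e i p : ℝ)| < c * ε) :
    |∑ p ∈ t, ((∑ i, x i p : ℤ) : ℝ) - ∑ p ∈ t, ((∑ i, (c * x i p + e i p)).bmod M : ℝ) / c|
      < ε := by
  have hc' : (0 : ℝ) < c := Nat.cast_pos.2 hc
  have hdecode : ∀ p ∈ t, ((∑ i, (c * x i p + e i p)).bmod M : ℝ) / c
      = ((∑ i, x i p : ℤ) : ℝ) + (∑ i, (e i p : ℝ)) / c := by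
    intro p hp
    rw [bmod_sum_mul_add_eq (fun i => hx i p) hM (hnode p hp)]
    push_cast
    field_simp
  rw [Finset.sum_congr rfl hdecode, Finset.sum_add_distrib, ← Finset.sum_div, sub_add_cancel_left,
    abs_neg, abs_div, Nat.abs_cast, div_lt_iff₀ hc']
  linarith

lemma ofReal_one_sub_le_of_compl_subset {Ω : Type*} [MeasurableSpace Ω] {μ : Measure Ω}
    [IsProbabilityMeasure μ] {S E : Set Ω} {δ : ℝ} (hE : μ.real E ≤ δ) (hS : Eᶜ ⊆ S) :
    ENNReal.ofReal (1 - δ) ≤ μ S := by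
  have h : 1 ≤ μ.real S + μ.real E := by
    calc (1 : ℝ) = μ.real (S ∪ Sᶜ) := by rw [Set.union_compl_self, probReal_univ]
      _ ≤ μ.real S + μ.real Sᶜ := measureReal_union_le _ _
      _ ≤ μ.real S + μ.real E := add_le_add_right (measureReal_mono (Set.compl_subset_comm.1 hS)) _
  rw [← ofReal_measureReal]
  exact ENNReal.ofReal_le_ofReal (by linarith)

theorem dp_quantile_utility_general
    {Ω : Type*} [MeasurableSpace Ω] (P : Measure Ω) [IsProbabilityMeasure P]
    (n b q c M : ℕ) (hn : 1 ≤ n) (hq : 1 ≤ q) (hbq : b = 2 ^ q) (hc : 0 < c)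
    (σ θ δ : ℝ) (hσ : 1 / 2 ≤ σ) (hδ : 0 < δ)
    (hM : 2 + 2 * (c : ℝ) * n + 2 * n * Real.sqrt (2 * σ ^ 2 * Real.log (16 * n * b / δ))
      ≤ (M : ℝ))
    (l : ℕ → ℝ)
    (ℓ : Fin n → ℝ)
    (x : Fin n → ℕ × ℕ → ℤ)
    (hx : ∀ i r j, x i (r, j) =
      if ℓ i ∈ Set.Ico (l (2 ^ r * (j - 1))) (l (2 ^ r * j)) then 1 else 0)
    (C : ℝ)
    (ξ : Fin n → ℕ × ℕ → Ω → ℤ)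
    (hmeas : ∀ i p, Measurable (ξ i p))
    (hindep : iIndepFun (fun (ip : Fin n × (ℕ × ℕ)) ω => ξ ip.1 ip.2 ω) P)
    (hlaw : ∀ i p (k : ℤ), P {ω | ξ i p ω = k}
      = ENNReal.ofReal (C * Real.exp (-(k : ℝ) ^ 2 / (2 * σ ^ 2))))
    (Pj : Fin b → Finset (ℕ × ℕ))
    (hPvalid : ∀ j, ∀ p ∈ Pj j, p.1 < q ∧ 1 ≤ p.2 ∧ p.2 ≤ 2 ^ (q - p.1))
    (hPcard : ∀ j, (Pj j).card ≤ q)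
    (s : Ω → ℕ × ℕ → ℤ)
    (hs : ∀ ω p, s ω p = Int.bmod (∑ i, ((c : ℤ) * x i p + ξ i p ω)) M)
    (Hhat : Ω → Fin b → ℝ)
    (hHhat : ∀ ω j, Hhat ω j = ∑ p ∈ Pj j, (s ω p : ℝ) / (c : ℝ))
    (H : Fin b → ℝ)
    (hH : ∀ j, H j = ∑ p ∈ Pj j, ((∑ i, x i p : ℤ) : ℝ))
    (jstar : Ω → Fin b) :
    ENNReal.ofReal (1 - δ) ≤
      P {ω | |H (jstar ω) / n - (1 - θ)| ≤ |Hhat ω (jstar ω) / n - (1 - θ)|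
        + Real.sqrt (4 * σ ^ 2 / ((c : ℝ) ^ 2 * n) * q * Real.log (4 * b / δ))} := by
  rcases le_or_gt 1 δ with hδ1 | hδ1
  · rw [ENNReal.ofReal_eq_zero.2 (by linarith)]
    exact zero_le
  have hξ : IsDiscreteGaussianNoise P (fun ip : Fin n × (ℕ × ℕ) => ξ ip.1 ip.2) σ C :=
    ⟨fun ip => hmeas ip.1 ip.2, hindep, fun ip => hlaw ip.1 ip.2⟩
  have hσ0 : σ ≠ 0 := (by linarith : 0 < σ).ne'
  have hbad := (measureReal_union_le _ _).trans <| (add_le_add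
    (hξ.measureReal_node_noise_ge_le hσ0 hn hbq.ge hδ hδ1)
    (hξ.measureReal_prefix_noise_ge_le hσ0 Pj hPcard hn hq (hbq ▸ Nat.one_le_two_pow) hc hδ
      hδ1)).trans (add_halves δ).le
  refine ofReal_one_sub_le_of_compl_subset hbad fun ω hω => ?_
  simp only [Set.mem_compl_iff, Set.mem_union, Set.mem_iUnion, not_or, not_exists,
    Set.mem_ofPred_eq, not_le] at hω
  have hx1 (i : Fin n) (p : ℕ × ℕ) : |x i p| ≤ 1 := by
    obtain ⟨r, o⟩ := p
    rw [hx]; split_ifs <;> simp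
  have hclose := abs_sum_sub_sum_bmod_div_lt hc hx1 (e := fun i p => ξ i p ω)
    (t := Pj (jstar ω)) hM (fun p hp => hω.1 p (mem_dyadicNodes.2 (hPvalid _ p hp)))
    (hω.2 _ (Finset.mem_univ _))
  simp only [← hs, ← hHhat, ← hH] at hclose
  have hdist : |H (jstar ω) / n - Hhat ω (jstar ω) / n|
      < √(4 * σ ^ 2 / ((c : ℝ) ^ 2 * n) * q * Real.log (4 * b / δ)) := by
    rw [← sub_div, abs_div, Nat.abs_cast, div_lt_iff₀ (by exact_mod_cast hn), mul_comm]
    exact hclose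
  simp only [Set.mem_ofPred_eq]
  linarith [abs_sub_le (H (jstar ω) / n) (Hhat ω (jstar ω) / n) (1 - θ)]

/-- Utility of differentially private quantile estimation via hierarchical histograms with
distributed discrete Gaussian noise: under the modulus condition
`M ≥ 2 + 2cn + 2n√(2σ² log(16nb/δ))`, with probability at least `1 − δ` the quantile error
satisfies `Δ_θ(Ĥ, H) ≤ R*_θ(Ĥ) + √((4σ²/(c²n)) · log₂ b · log(4b/δ))`.
Here `b = 2^q` (so `log₂ b = q`), the modular reduction takes the balanced representative
(`Int.bmod`), `Ĥ(j) = ∑_{(r,o) ∈ P_j} ĥ(r,o)` with `ĥ = s/c`, `H` is the corresponding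
cumulative sum of the true counts, `jstar ω` is a minimizer of `|Ĥ(j)/n − (1−θ)|`, so that
`R*_θ(Ĥ) = |Ĥ(jstar)/n − (1−θ)|`, and `Δ_θ(Ĥ, H) = |H(jstar)/n − (1−θ)|`. -/
theorem dp_quantile_utility
    {Ω : Type*} [MeasurableSpace Ω] (P : Measure Ω) [IsProbabilityMeasure P]
    (n b q c M : ℕ) (hn : 1 ≤ n) (hq : 1 ≤ q) (hbq : b = 2 ^ q) (hc : 0 < c)
    (σ θ δ B : ℝ) (hσ : 1 / 2 ≤ σ) (hθ : θ ∈ Set.Ioo (0:ℝ) 1) (hδ : 0 < δ) (hB : 0 < B)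
    (hM : 2 + 2 * (c : ℝ) * n + 2 * n * Real.sqrt (2 * σ ^ 2 * Real.log (16 * n * b / δ))
      ≤ (M : ℝ))
    (l : ℕ → ℝ) (hl0 : l 0 = 0) (hlB : l b = B) (hlmono : ∀ j < b, l j < l (j + 1))
    (ℓ : Fin n → ℝ) (hℓ : ∀ i, ℓ i ∈ Set.Icc (0:ℝ) B)
    (x : Fin n → ℕ × ℕ → ℤ)
    (hx : ∀ i r j, x i (r, j) =
      if ℓ i ∈ Set.Ico (l (2 ^ r * (j - 1))) (l (2 ^ r * j)) then 1 else 0)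
    (C : ℝ)
    (ξ : Fin n → ℕ × ℕ → Ω → ℤ)
    (hmeas : ∀ i p, Measurable (ξ i p))
    (hindep : iIndepFun (fun (ip : Fin n × (ℕ × ℕ)) ω => ξ ip.1 ip.2 ω) P)
    (hlaw : ∀ i p (k : ℤ), P {ω | ξ i p ω = k}
      = ENNReal.ofReal (C * Real.exp (-(k : ℝ) ^ 2 / (2 * σ ^ 2))))
    (Pj : Fin b → Finset (ℕ × ℕ))
    (hPvalid : ∀ j, ∀ p ∈ Pj j, p.1 < q ∧ 1 ≤ p.2 ∧ p.2 ≤ 2 ^ (q - p.1))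
    (hPcard : ∀ j, (Pj j).card ≤ q)
    (hPdisj : ∀ j : Fin b, ((Pj j : Set (ℕ × ℕ))).PairwiseDisjoint
      (fun p => Finset.Icc (2 ^ p.1 * (p.2 - 1) + 1) (2 ^ p.1 * p.2)))
    (hPunion : ∀ j : Fin b,
      (Pj j).biUnion (fun p => Finset.Icc (2 ^ p.1 * (p.2 - 1) + 1) (2 ^ p.1 * p.2))
        = Finset.Icc 1 ((j : ℕ) + 1))
    (s : Ω → ℕ × ℕ → ℤ)
    (hs : ∀ ω p, s ω p = Int.bmod (∑ i, ((c : ℤ) * x i p + ξ i p ω)) M)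
    (Hhat : Ω → Fin b → ℝ)
    (hHhat : ∀ ω j, Hhat ω j = ∑ p ∈ Pj j, (s ω p : ℝ) / (c : ℝ))
    (H : Fin b → ℝ)
    (hH : ∀ j, H j = ∑ p ∈ Pj j, ((∑ i, x i p : ℤ) : ℝ))
    (jstar : Ω → Fin b)
    (hjstar : ∀ ω j, |Hhat ω (jstar ω) / n - (1 - θ)| ≤ |Hhat ω j / n - (1 - θ)|) :
    ENNReal.ofReal (1 - δ) ≤
      P {ω | |H (jstar ω) / n - (1 - θ)| ≤ |Hhat ω (jstar ω) / n - (1 - θ)|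
        + Real.sqrt (4 * σ ^ 2 / ((c : ℝ) ^ 2 * n) * q * Real.log (4 * b / δ))} :=
  dp_quantile_utility_general P n b q c M hn hq hbq hc σ θ δ hσ hδ hM l ℓ x hx C ξ hmeas hindep hlaw
    Pj hPvalid hPcard s hs Hhat hHhat H hH jstar
end

section
/- Let λ, Γ, A, B, C, T > 0 with λΓ ≤ 1 and T ≥ 1/(λΓ). Define φ, ψ : (0,Γ] → ℝ by φ(γ) = A/(exp(λγT) − 1) + Bγ + Cγ² and ψ(γ) = 2A·exp(−λγT) + Bγ + Cγ², and set γ* = min{ Γ, (1/(λT))·max(1, log(AλT/B)), (1/(λT))·max(1, log(Aλ²T²/C)) }. Then 1/(exp(λγ*T) − 1) ≤ 1 and φ(γ*) ≤ ψ(γ*) ≤ 2A·exp(−λΓT) + (3B/(λT))·max(1, log(AλT/B)) + (3C/(λ²T²))·(max(1, log(Aλ²T²/C)))². -/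
/-! With `m₁ = max 1 (log (AλT/B))` and `m₂ = max 1 (log (Aλ²T²/C))`, the exponent
`x = λγ*T` equals `min (λΓT) (min m₁ m₂) ≥ 1`, so `eˣ ≥ 2` and `1/(eˣ - 1) ≤ 2e⁻ˣ`.
Since `e^(-min a b) ≤ e⁻ᵃ + e⁻ᵇ`, the term `2Ae⁻ˣ` costs at most `2Ae^(-λΓT)` plus
`2Ae^(-m₁) ≤ 2B/(λT)` and `2Ae^(-m₂) ≤ 2C/(λT)²`, by the choice of `m₁, m₂`; the remaining
`Bγ* + Cγ*²` is at most `Bm₁/(λT) + Cm₂²/(λT)²` because `λγ*T ≤ m₁, m₂`. -/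

open Real

namespace Real

lemma two_le_exp_of_one_le {x : ℝ} (hx : 1 ≤ x) : 2 ≤ exp x := by
  linarith [add_one_le_exp x]

lemma one_div_exp_sub_one_le_one {x : ℝ} (hx : 1 ≤ x) : 1 / (exp x - 1) ≤ 1 := by
  rw [div_le_one (by linarith [two_le_exp_of_one_le hx])]
  linarith [two_le_exp_of_one_le hx]

lemma div_exp_sub_one_le_two_mul_exp_neg {a x : ℝ} (ha : 0 ≤ a) (hx : 1 ≤ x) :
    a / (exp x - 1) ≤ 2 * a * exp (-x) := by
  have h2 := two_le_exp_of_one_le hx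
  rw [exp_neg, ← div_eq_mul_inv, div_le_div_iff₀ (by linarith) (exp_pos x)]
  nlinarith

lemma exp_neg_min_le_add (a b : ℝ) : exp (-min a b) ≤ exp (-a) + exp (-b) := by
  rcases le_total a b with h | h
  · rw [min_eq_left h]; linarith [exp_pos (-b)]
  · rw [min_eq_right h]; linarith [exp_pos (-a)]

lemma mul_exp_neg_le_div_of_log_le {a b c m : ℝ} (hb : 0 < b) (hc : 0 < c)
    (h : log (a * c / b) ≤ m) : a * exp (-m) ≤ b / c := by
  have habc : a * c / b ≤ exp m := (le_exp_log _).trans (exp_le_exp.2 h)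
  rw [div_le_iff₀ hb] at habc
  rw [le_div_iff₀ hc, exp_neg, mul_right_comm, ← div_eq_mul_inv, div_le_iff₀ (exp_pos m)]
  linarith

end Real

theorem learning_rate_optimization_strongly_convex_general
    (lam Γ A B C T : ℝ)
    (hlam : 0 < lam) (hΓ : 0 < Γ) (hA : 0 < A) (hB : 0 < B) (hC : 0 < C) (hT : 0 < T)
    (hTbig : 1 / (lam * Γ) ≤ T) :
    ∀ γstar : ℝ,
      γstar = min Γ (min ((1 / (lam * T)) * max 1 (Real.log (A * lam * T / B)))
        ((1 / (lam * T)) * max 1 (Real.log (A * lam ^ 2 * T ^ 2 / C)))) →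
      1 / (Real.exp (lam * γstar * T) - 1) ≤ 1 ∧
      A / (Real.exp (lam * γstar * T) - 1) + B * γstar + C * γstar ^ 2
        ≤ 2 * A * Real.exp (-(lam * γstar * T)) + B * γstar + C * γstar ^ 2 ∧
      2 * A * Real.exp (-(lam * γstar * T)) + B * γstar + C * γstar ^ 2
        ≤ 2 * A * Real.exp (-(lam * Γ * T))
          + (3 * B / (lam * T)) * max 1 (Real.log (A * lam * T / B))
          + (3 * C / (lam ^ 2 * T ^ 2)) * (max 1 (Real.log (A * lam ^ 2 * T ^ 2 / C))) ^ 2 := by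
  intro γ hγ
  set m₁ := max 1 (log (A * lam * T / B))
  set m₂ := max 1 (log (A * lam ^ 2 * T ^ 2 / C))
  have hL : 0 < lam * T := mul_pos hlam hT
  have hx : lam * γ * T = min (lam * Γ * T) (min m₁ m₂) := by
    rw [hγ, mul_right_comm, mul_min_of_nonneg _ _ hL.le, mul_min_of_nonneg _ _ hL.le,
      ← mul_assoc, ← mul_assoc, mul_one_div_cancel hL.ne', one_mul, one_mul, mul_right_comm]
  have hΓT : 1 ≤ lam * Γ * T := by
    rw [div_le_iff₀ (mul_pos hlam hΓ)] at hTbig; linarith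
  have hx₁ : 1 ≤ lam * γ * T := hx ▸ le_min hΓT (le_min (le_max_left _ _) (le_max_left _ _))
  refine ⟨one_div_exp_sub_one_le_one hx₁,
    by linarith [div_exp_sub_one_le_two_mul_exp_neg hA.le hx₁], ?_⟩
  have hexp : exp (-(lam * γ * T)) ≤ exp (-(lam * Γ * T)) + exp (-m₁) + exp (-m₂) := by
    rw [hx]
    linarith [exp_neg_min_le_add (lam * Γ * T) (min m₁ m₂), exp_neg_min_le_add m₁ m₂]
  have hA₁ : A * exp (-m₁) ≤ B / (lam * T) :=
    mul_exp_neg_le_div_of_log_le hB hL (by rw [← mul_assoc]; exact le_max_right _ _)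
  have hA₂ : A * exp (-m₂) ≤ C / (lam ^ 2 * T ^ 2) :=
    mul_exp_neg_le_div_of_log_le hC (by positivity) (by rw [← mul_assoc]; exact le_max_right _ _)
  have hBγ : B * γ ≤ B / (lam * T) * m₁ := by
    rw [show B * γ = B / (lam * T) * (lam * γ * T) by field_simp]
    gcongr
    exact hx ▸ (min_le_right _ _).trans (min_le_left _ _)
  have hCγ : C * γ ^ 2 ≤ C / (lam ^ 2 * T ^ 2) * m₂ ^ 2 := by
    rw [show C * γ ^ 2 = C / (lam ^ 2 * T ^ 2) * (lam * γ * T) ^ 2 by field_simp]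
    gcongr
    exact hx ▸ (min_le_right _ _).trans (min_le_right _ _)
  have hm₁ : B / (lam * T) ≤ B / (lam * T) * m₁ :=
    le_mul_of_one_le_right (by positivity) (le_max_left _ _)
  have hm₂ : C / (lam ^ 2 * T ^ 2) ≤ C / (lam ^ 2 * T ^ 2) * m₂ ^ 2 :=
    le_mul_of_one_le_right (by positivity) (one_le_pow₀ (le_max_left _ _))
  rw [mul_div_assoc 3 B, mul_div_assoc 3 C]
  linarith [mul_le_mul_of_nonneg_left hexp (by positivity : (0 : ℝ) ≤ 2 * A)]

/-- Learning-rate optimization lemma (strongly convex case): with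
`γ* = min{Γ, (1/(λT)) max(1, log(AλT/B)), (1/(λT)) max(1, log(Aλ²T²/C))}`,
one has `1/(exp(λγ*T) - 1) ≤ 1` and
`φ(γ*) ≤ ψ(γ*) ≤ 2A exp(−λΓT) + (3B/(λT)) max(1, log(AλT/B))
               + (3C/(λ²T²)) (max(1, log(Aλ²T²/C)))²`. -/
theorem learning_rate_optimization_strongly_convex
    (lam Γ A B C T : ℝ)
    (hlam : 0 < lam) (hΓ : 0 < Γ) (hA : 0 < A) (hB : 0 < B) (hC : 0 < C) (hT : 0 < T)
    (hlamΓ : lam * Γ ≤ 1) (hTbig : 1 / (lam * Γ) ≤ T) :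
    ∀ γstar : ℝ,
      γstar = min Γ (min ((1 / (lam * T)) * max 1 (Real.log (A * lam * T / B)))
        ((1 / (lam * T)) * max 1 (Real.log (A * lam ^ 2 * T ^ 2 / C)))) →
      1 / (Real.exp (lam * γstar * T) - 1) ≤ 1 ∧
      A / (Real.exp (lam * γstar * T) - 1) + B * γstar + C * γstar ^ 2
        ≤ 2 * A * Real.exp (-(lam * γstar * T)) + B * γstar + C * γstar ^ 2 ∧
      2 * A * Real.exp (-(lam * γstar * T)) + B * γstar + C * γstar ^ 2
        ≤ 2 * A * Real.exp (-(lam * Γ * T))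
          + (3 * B / (lam * T)) * max 1 (Real.log (A * lam * T / B))
          + (3 * C / (lam ^ 2 * T ^ 2)) * (max 1 (Real.log (A * lam ^ 2 * T ^ 2 / C))) ^ 2 :=
  learning_rate_optimization_strongly_convex_general lam Γ A B C T hlam hΓ hA hB hC hT hTbig
end

section
/- Let F_1,…,F_n : ℝ^d → [0,B], let θ ∈ (0,1], 1 ≤ m ≤ n, λ ≥ 0, and ν > 0, and set F̃_i(w) = F_i(w) + (λ/2)‖w‖². Define F_θ(w) = max_{π∈P_θ} ∑_{i=1}^n π_i F̃_i(w), F_{θ,S}^ν(w) = max_{π∈P_{θ,S}} ( ∑_{i∈S} π_i F̃_i(w) − ν D_S(π) ), and F̄_θ^ν(w) = E_{S∼U_m}[F_{θ,S}^ν(w)]. Then for every w ∈ ℝ^d, |F̄_θ^ν(w) − F_θ(w)| ≤ B/√(θm) + 2ν log m. -/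
/-!
For values `f i ∈ [0, B]`, the maximum of `∑ π i * f i` over the capped simplex
`{π ≥ 0, ∑ π = 1, π ≤ 1 / s}` on `S` is the layer-cake integral
`s⁻¹ ∫₀^B min s #{i ∈ S | u ≤ f i} du`: pointwise in `u` the mass above level `u` is at most
`min 1 (#{…} / s)`, with equality for a threshold maximiser. The regulariser `λ‖w‖²/2` shifts
every objective by the same constant and the entropy `D_S(π)` lies in `[0, log m]`, so smoothing
moves each minibatch value by at most `ν log m`.

For a uniform `m`-subset `S`, the count `#(S ∩ T)` is hypergeometric with mean `a = m #T / n`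
and variance at most `a`, so by concavity and Cauchy–Schwarz
`min (θm) a - √(θm) ≤ E min (θm) #(S ∩ T) ≤ min (θm) a`, and `min (θm) a = (m/n) min (θn) #T`.
Applied to `T = {i | u ≤ F i w}` and integrated over `u ∈ [0, B]`, this bounds the bias of the
unsmoothed minibatch superquantile by `B / √(θm)`.
-/

open Finset MeasureTheory

section CappedSimplex

variable {ι : Type*} (S : Finset ι) (f : ι → ℝ) {s B : ℝ}

def cappedSimplex (S : Finset ι) (s : ℝ) : Set (ι → ℝ) :=
  {π | (∀ i, 0 ≤ π i) ∧ (∀ i ∉ S, π i = 0) ∧ ∑ i ∈ S, π i = 1 ∧ ∀ i, π i ≤ 1 / s}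

/-- For `f` with values in `[0, B]`, the maximum of `∑ i ∈ S, π i * f i` over
`cappedSimplex S s` (the superquantile of `f` on `S`), written as a layer-cake integral so that it
is linear in the counting function `u ↦ #{i ∈ S | u ≤ f i}`. -/
noncomputable def tailMean (S : Finset ι) (f : ι → ℝ) (s B : ℝ) : ℝ :=
  s⁻¹ * ∫ u in (0 : ℝ)..B, min s (#{i ∈ S | u ≤ f i} : ℝ)

lemma antitone_card_filter_le : Antitone fun u => #{i ∈ S | u ≤ f i} :=
  fun _ _ huv => card_le_card <| monotone_filter_right S fun _ _ h => huv.trans h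

lemma antitone_min_card_filter_le (c : ℝ) :
    Antitone fun u => min c (#{i ∈ S | u ≤ f i} : ℝ) :=
  fun _ _ huv => min_le_min_left c (by exact_mod_cast antitone_card_filter_le S f huv)

lemma integral_sum_filter_le (π : ι → ℝ) (hf : ∀ i ∈ S, f i ∈ Set.Icc 0 B) :
    ∫ u in (0 : ℝ)..B, ∑ i ∈ S with u ≤ f i, π i = ∑ i ∈ S, π i * f i := by
  have hind : ∀ i u, (if u ≤ f i then π i else 0) = {u | u ≤ f i}.indicator (fun _ => π i) u :=
    fun i u => by simp [Set.indicator_apply]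
  have hint : ∀ i ∈ S, IntervalIntegrable ({u | u ≤ f i}.indicator fun _ => π i) volume 0 B :=
    fun i _ => intervalIntegrable_iff.2
      ((intervalIntegrable_iff.1 intervalIntegrable_const).indicator measurableSet_Iic)
  simp_rw [sum_filter, hind]
  rw [intervalIntegral.integral_finsetSum hint]
  refine sum_congr rfl fun i hi => ?_
  rw [intervalIntegral.integral_indicator (hf i hi), intervalIntegral.integral_const, smul_eq_mul,
    sub_zero, mul_comm]

lemma sum_filter_le_of_mem_cappedSimplex {π : ι → ℝ} (hπ : π ∈ cappedSimplex S s) (hs : 0 < s)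
    (p : ι → Prop) [DecidablePred p] :
    ∑ i ∈ S with p i, π i ≤ s⁻¹ * min s #{i ∈ S | p i} := by
  obtain ⟨hπ0, -, hπ1, hπs⟩ := hπ
  rw [mul_min_of_nonneg _ _ (inv_nonneg.2 hs.le), inv_mul_cancel₀ hs.ne']
  refine le_min ?_ ?_
  · exact hπ1 ▸ sum_le_sum_of_subset_of_nonneg (filter_subset _ _) fun i _ _ => hπ0 i
  · have := sum_le_card_nsmul _ _ _ fun i (_ : i ∈ {i ∈ S | p i}) => hπs i
    rwa [nsmul_eq_mul, one_div, mul_comm] at this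

lemma exists_threshold (hs : 0 < s) (hsS : s ≤ #S) :
    ∃ j ∈ S, (#{i ∈ S | f j < f i} : ℝ) ≤ s ∧ s ≤ #{i ∈ S | f j ≤ f i} := by
  have hSne : S.Nonempty := card_pos.1 (by exact_mod_cast hs.trans_le hsS)
  obtain ⟨j₀, hj₀, hmin⟩ := S.exists_min_image f hSne
  have hV : ({j ∈ S | s ≤ #{i ∈ S | f j ≤ f i}} : Finset ι).Nonempty :=
    ⟨j₀, mem_filter.2 ⟨hj₀, by rwa [filter_true_of_mem fun i hi => hmin i hi]⟩⟩
  obtain ⟨j, hjV, hmax⟩ := exists_max_image _ f hV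
  obtain ⟨hjS, hj⟩ := mem_filter.1 hjV
  refine ⟨j, hjS, not_lt.1 fun hlt => ?_, hj⟩
  -- the least value above `f j` would otherwise be a larger admissible threshold
  have hAne : ({i ∈ S | f j < f i} : Finset ι).Nonempty :=
    card_pos.1 (by exact_mod_cast hs.trans hlt)
  obtain ⟨k, hk, hkmin⟩ := exists_min_image _ f hAne
  obtain ⟨hkS, hjk⟩ := mem_filter.1 hk
  have hkV : k ∈ ({j ∈ S | s ≤ #{i ∈ S | f j ≤ f i}} : Finset ι) := by
    refine mem_filter.2 ⟨hkS, hlt.le.trans ?_⟩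
    exact_mod_cast card_le_card fun i hi => mem_filter.2 ⟨(mem_filter.1 hi).1, hkmin i hi⟩
  exact (hmax k hkV).not_gt hjk

lemma sum_two_level [DecidableEq ι] (A D R : Finset ι) (a b : ℝ) :
    ∑ i ∈ R, (a * (if i ∈ A then 1 else 0) + b * (if i ∈ D then 1 else 0))
      = a * #(R ∩ A) + b * #(R ∩ D) := by
  simp only [sum_add_distrib, ← mul_sum, sum_boole, filter_mem_eq_inter]

lemma two_level_mem_cappedSimplex [DecidableEq ι] {A D : Finset ι} (hAS : A ⊆ S) (hDS : D ⊆ S)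
    (hAD : Disjoint A D) (hs : 0 < s) {q : ℝ} (hq0 : 0 ≤ q) (hqs : q ≤ s⁻¹)
    (hmass : s⁻¹ * #A + q * #D = 1) :
    (fun i => s⁻¹ * (if i ∈ A then 1 else 0) + q * (if i ∈ D then 1 else 0))
      ∈ cappedSimplex S s := by
  refine ⟨fun i => ?_, fun i hi => ?_, ?_, fun i => ?_⟩
  · dsimp only
    split_ifs <;> positivity
  · have hiA : i ∉ A := fun h => hi (hAS h)
    have hiD : i ∉ D := fun h => hi (hDS h)
    simp [hiA, hiD]
  · rw [sum_two_level, inter_eq_right.2 hAS, inter_eq_right.2 hDS, hmass]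
  · by_cases hiA : i ∈ A
    · simp [hiA, disjoint_left.1 hAD hiA]
    · simp only [hiA, one_div, if_false, mul_zero, zero_add]
      split_ifs <;> simp [hqs, hs.le]

/-- The maximiser puts mass `1 / s` on the indices where `f` exceeds the threshold value `f j` of
`exists_threshold` and spreads the remaining mass evenly over the indices where `f = f j`. -/
lemma exists_mem_cappedSimplex_sum_filter_eq (hs : 0 < s) (hsS : s ≤ #S) :
    ∃ π ∈ cappedSimplex S s, ∀ u, ∑ i ∈ S with u ≤ f i, π i = s⁻¹ * min s #{i ∈ S | u ≤ f i} := by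
  classical
  obtain ⟨j, hjS, hA, hE⟩ := exists_threshold S f hs hsS
  set A := {i ∈ S | f j < f i}
  set D := {i ∈ S | f j = f i}
  have hAD : Disjoint A D := disjoint_filter.2 fun i _ h1 h2 => h1.ne h2
  have hD : (0 : ℝ) < #D := by exact_mod_cast card_pos.2 ⟨j, by simp [D, hjS]⟩
  rw [show {i ∈ S | f j ≤ f i} = A ∪ D by simp only [le_iff_lt_or_eq, filter_or, A, D],
    card_union_of_disjoint hAD, Nat.cast_add] at hE
  set q := (1 - s⁻¹ * #A) / #D
  have hq : s⁻¹ * #A + q * #D = 1 := by rw [div_mul_cancel₀ _ hD.ne']; ring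
  have hq0 : 0 ≤ q := div_nonneg (by rw [sub_nonneg, inv_mul_le_one₀ hs]; exact hA) hD.le
  have hqs : q ≤ s⁻¹ := by
    have := mul_le_mul_of_nonneg_left hE (inv_nonneg.2 hs.le)
    rw [inv_mul_cancel₀ hs.ne', mul_add] at this
    rw [div_le_iff₀ hD]
    linarith
  refine ⟨_, two_level_mem_cappedSimplex S (filter_subset _ _) (filter_subset _ _) hAD hs hq0 hqs
    hq, fun u => ?_⟩
  set R := {i ∈ S | u ≤ f i}
  rw [sum_two_level]
  rcases le_or_gt u (f j) with hu | hu
  · have hAR : A ⊆ R := monotone_filter_right S fun i _ h => hu.trans h.le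
    have hDR : D ⊆ R := monotone_filter_right S fun i _ h => hu.trans h.le
    have hR : s ≤ #R := hE.trans <| by
      rw [← Nat.cast_add, ← card_union_of_disjoint hAD]
      exact_mod_cast card_le_card (union_subset hAR hDR)
    rw [inter_eq_right.2 hAR, inter_eq_right.2 hDR, hq, min_eq_left hR, inv_mul_cancel₀ hs.ne']
  · have hRA : R ⊆ A := monotone_filter_right S fun i _ h => hu.trans_le h
    have hRD : R ∩ D = ∅ := disjoint_iff_inter_eq_empty.1 <|
      disjoint_filter.2 fun i _ h1 h2 => (hu.trans_le h1).ne' h2.symm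
    have hR : (#R : ℝ) ≤ s := le_trans (by exact_mod_cast card_le_card hRA) hA
    rw [inter_eq_left.2 hRA, hRD, min_eq_right hR, card_empty, Nat.cast_zero, mul_zero, add_zero]

lemma isGreatest_tailMean_add (hs : 0 < s) (hsS : s ≤ #S) (hf : ∀ i ∈ S, f i ∈ Set.Icc 0 B)
    (c : ℝ) :
    IsGreatest ((fun π => ∑ i ∈ S, π i * (f i + c)) '' cappedSimplex S s)
      (tailMean S f s B + c) := by
  have hshift : ∀ π ∈ cappedSimplex S s, ∑ i ∈ S, π i * (f i + c) = ∑ i ∈ S, π i * f i + c :=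
    fun π hπ => by simp only [mul_add, sum_add_distrib, ← sum_mul, hπ.2.2.1, one_mul]
  have hB : 0 ≤ B := by
    obtain ⟨i, hi⟩ := card_pos.1 (by exact_mod_cast hs.trans_le hsS)
    exact (hf i hi).1.trans (hf i hi).2
  have hint : IntervalIntegrable (fun u => s⁻¹ * min s (#{i ∈ S | u ≤ f i} : ℝ)) volume 0 B :=
    (antitone_min_card_filter_le S f s).intervalIntegrable.const_mul _
  refine ⟨?_, ?_⟩
  · obtain ⟨π, hπ, hπu⟩ := exists_mem_cappedSimplex_sum_filter_eq S f hs hsS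
    refine ⟨π, hπ, ?_⟩
    simp only [hshift π hπ, ← integral_sum_filter_le S f π hf, hπu, tailMean,
      intervalIntegral.integral_const_mul]
  · rintro _ ⟨π, hπ, rfl⟩
    simp only [hshift π hπ, ← integral_sum_filter_le S f π hf, tailMean, add_le_add_iff_right,
      ← intervalIntegral.integral_const_mul]
    refine intervalIntegral.integral_mono_on hB ?_ hint
      fun u _ => sum_filter_le_of_mem_cappedSimplex S hπ hs _
    exact Antitone.intervalIntegrable fun u v huv => sum_le_sum_of_subset_of_nonneg
      (monotone_filter_right S fun i _ h => huv.trans h) fun i _ _ => hπ.1 i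

end CappedSimplex

lemma sSup_sub_mem_Icc {β : Type*} {Δ : Set β} {J φ : β → ℝ} {M δ : ℝ}
    (hJ : IsGreatest (J '' Δ) M) (hφ : ∀ x ∈ Δ, φ x ∈ Set.Icc 0 δ) :
    sSup {y | ∃ x ∈ Δ, y = J x - φ x} ∈ Set.Icc (M - δ) M := by
  obtain ⟨⟨x₀, hx₀, hJx₀⟩, hM⟩ := hJ
  have hbdd : ∀ y ∈ {y | ∃ x ∈ Δ, y = J x - φ x}, y ≤ M := by
    rintro _ ⟨x, hx, rfl⟩
    linarith [hM ⟨x, hx, rfl⟩, (hφ x hx).1]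
  have hmem : J x₀ - φ x₀ ∈ {y | ∃ x ∈ Δ, y = J x - φ x} := ⟨x₀, hx₀, rfl⟩
  have hlow : M - δ ≤ J x₀ - φ x₀ := by linarith [(hφ x₀ hx₀).2]
  exact ⟨hlow.trans (le_csSup ⟨M, hbdd⟩ hmem), csSup_le ⟨_, hmem⟩ hbdd⟩

section Entropy

variable {ι : Type*} (S : Finset ι) {π : ι → ℝ}

lemma sum_mul_log_mul_card_nonneg (hπ0 : ∀ i ∈ S, 0 ≤ π i) (hπ1 : ∑ i ∈ S, π i = 1) :
    0 ≤ ∑ i ∈ S, π i * Real.log (π i * #S) := by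
  have hS : (0 : ℝ) < #S := by
    exact_mod_cast card_pos.2 (nonempty_of_sum_ne_zero (hπ1 ▸ one_ne_zero))
  have hterm : ∀ i ∈ S, π i - (#S : ℝ)⁻¹ ≤ π i * Real.log (π i * #S) := fun i hi => by
    rcases (hπ0 i hi).eq_or_lt with h | h
    · simp [← h]
    · have := mul_le_mul_of_nonneg_left (Real.one_sub_inv_le_log_of_pos (by positivity :
        0 < π i * #S)) h.le
      rwa [mul_sub, mul_one, mul_inv, ← mul_assoc, mul_inv_cancel₀ h.ne', one_mul] at this
  calc (0 : ℝ) = ∑ i ∈ S, (π i - (#S : ℝ)⁻¹) := by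
        rw [sum_sub_distrib, hπ1, sum_const, nsmul_eq_mul, mul_inv_cancel₀ hS.ne', sub_self]
    _ ≤ _ := sum_le_sum hterm

lemma sum_mul_log_mul_le_log {m : ℝ} (hm : 0 ≤ m) (hπ0 : ∀ i ∈ S, 0 ≤ π i)
    (hπ1 : ∑ i ∈ S, π i = 1) :
    ∑ i ∈ S, π i * Real.log (π i * m) ≤ Real.log m := by
  calc ∑ i ∈ S, π i * Real.log (π i * m) ≤ ∑ i ∈ S, π i * Real.log m := sum_le_sum fun i hi => by
        rcases (hπ0 i hi).eq_or_lt with h | h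
        · simp [← h]
        rcases hm.eq_or_lt with hm0 | hm0
        · simp [← hm0]
        have : π i ≤ 1 := hπ1 ▸ single_le_sum hπ0 hi
        exact mul_le_mul_of_nonneg_left (Real.log_le_log (by positivity) (by nlinarith)) h.le
    _ = Real.log m := by rw [← sum_mul, hπ1, one_mul]

end Entropy

section Superquantile

variable {ι : Type*} {s B : ℝ}

lemma sSup_cappedSimplex_eq [Fintype ι] (f : ι → ℝ) (hf : ∀ i, f i ∈ Set.Icc 0 B) (hs : 0 < s)
    (hsι : s ≤ Fintype.card ι) (c : ℝ) :
    sSup {x : ℝ | ∃ π : ι → ℝ, (∀ i, 0 ≤ π i) ∧ (∑ i, π i = 1) ∧ (∀ i, π i ≤ 1 / s) ∧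
      x = ∑ i, π i * (f i + c)} = tailMean univ f s B + c := by
  refine Eq.trans ?_ (isGreatest_tailMean_add univ f hs (by simpa using hsι)
    (fun i _ => hf i) c).csSup_eq
  congr 1
  ext x
  simp [cappedSimplex, eq_comm, and_assoc]

lemma sSup_cappedSimplex_sub_entropy_mem_Icc (S : Finset ι) (f : ι → ℝ) {m : ℕ} (hS : #S = m)
    (hf : ∀ i ∈ S, f i ∈ Set.Icc 0 B) (hs : 0 < s) (hsm : s ≤ m) {ν : ℝ} (hν : 0 ≤ ν) (c : ℝ) :
    sSup {x : ℝ | ∃ π : ι → ℝ, (∀ i, 0 ≤ π i) ∧ (∀ i ∉ S, π i = 0) ∧ (∑ i ∈ S, π i = 1) ∧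
      (∀ i, π i ≤ 1 / s) ∧
      x = (∑ i ∈ S, π i * (f i + c)) - ν * ∑ i ∈ S, π i * Real.log (π i * m)}
      ∈ Set.Icc (tailMean S f s B + c - ν * Real.log m) (tailMean S f s B + c) := by
  subst hS
  have hentropy : ∀ π ∈ cappedSimplex S s,
      ν * ∑ i ∈ S, π i * Real.log (π i * #S) ∈ Set.Icc 0 (ν * Real.log #S) := fun π hπ =>
    ⟨mul_nonneg hν (sum_mul_log_mul_card_nonneg S (fun i _ => hπ.1 i) hπ.2.2.1),
      mul_le_mul_of_nonneg_left
        (sum_mul_log_mul_le_log S (Nat.cast_nonneg _) (fun i _ => hπ.1 i) hπ.2.2.1) hν⟩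
  convert sSup_sub_mem_Icc (isGreatest_tailMean_add S f hs hsm hf c) hentropy using 3
  ext x
  simp only [cappedSimplex, Set.mem_ofPred_eq, and_assoc]

end Superquantile

section MomentBounds

variable {β : Type*} (𝒮 : Finset β) (X : β → ℝ) {a : ℝ}

lemma sum_abs_sub_le_of_moments (hmean : ∑ S ∈ 𝒮, X S = #𝒮 * a)
    (hsq : ∑ S ∈ 𝒮, X S ^ 2 ≤ #𝒮 * (a ^ 2 + a)) (t : ℝ) :
    ∑ S ∈ 𝒮, |X S - t| ≤ #𝒮 * √((a - t) ^ 2 + a) := by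
  have hvar : ∑ S ∈ 𝒮, (X S - t) ^ 2 ≤ #𝒮 * ((a - t) ^ 2 + a) := by
    have hexp : ∀ S, (X S - t) ^ 2 = X S ^ 2 - 2 * t * X S + t ^ 2 := fun S => by ring
    have : ∑ S ∈ 𝒮, (X S - t) ^ 2 = ∑ S ∈ 𝒮, X S ^ 2 - 2 * t * ∑ S ∈ 𝒮, X S + #𝒮 * t ^ 2 := by
      simp only [hexp, sum_add_distrib, sum_sub_distrib, ← mul_sum, sum_const, nsmul_eq_mul]
    rw [this, hmean]
    linarith
  have hcs := sq_sum_le_card_mul_sum_sq (s := 𝒮) (f := fun S => |X S - t|)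
  simp only [sq_abs] at hcs
  calc ∑ S ∈ 𝒮, |X S - t| ≤ √((#𝒮 : ℝ) ^ 2 * ((a - t) ^ 2 + a)) :=
        (le_abs_self _).trans <| Real.abs_le_sqrt <| by
          nlinarith [mul_le_mul_of_nonneg_left hvar (Nat.cast_nonneg (α := ℝ) #𝒮)]
    _ = #𝒮 * √((a - t) ^ 2 + a) := by
        rw [Real.sqrt_mul (sq_nonneg _), Real.sqrt_sq (Nat.cast_nonneg _)]

lemma sum_max_sub_le_of_moments (hmean : ∑ S ∈ 𝒮, X S = #𝒮 * a)
    (hsq : ∑ S ∈ 𝒮, X S ^ 2 ≤ #𝒮 * (a ^ 2 + a)) {s : ℝ} (hs : 1 ≤ s) :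
    ∑ S ∈ 𝒮, max (X S - s) 0 ≤ #𝒮 * (max (a - s) 0 + √s) := by
  have hhalf : ∀ x : ℝ, max x 0 = (x + |x|) / 2 := fun x => by
    rcases le_total 0 x with h | h <;> simp [h, abs_of_nonneg, abs_of_nonpos]
  have hroot : √((a - s) ^ 2 + a) ≤ |a - s| + 2 * √s := by
    have h1 : 1 ≤ √s := Real.one_le_sqrt.2 hs
    rw [Real.sqrt_le_iff]
    refine ⟨by positivity, ?_⟩
    nlinarith [Real.sq_sqrt (zero_le_one.trans hs), le_abs_self (a - s), sq_abs (a - s),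
      abs_nonneg (a - s), mul_le_mul_of_nonneg_left h1 (abs_nonneg (a - s))]
  have habs := sum_abs_sub_le_of_moments 𝒮 X hmean hsq s
  have hshift : ∑ S ∈ 𝒮, (X S - s) = #𝒮 * (a - s) := by
    rw [sum_sub_distrib, hmean, sum_const, nsmul_eq_mul]; ring
  simp only [hhalf, ← sum_div, sum_add_distrib, hshift]
  nlinarith [mul_le_mul_of_nonneg_left hroot (Nat.cast_nonneg (α := ℝ) #𝒮)]

lemma le_sum_min_of_moments (hmean : ∑ S ∈ 𝒮, X S = #𝒮 * a)
    (hsq : ∑ S ∈ 𝒮, X S ^ 2 ≤ #𝒮 * (a ^ 2 + a)) (hX : ∀ S ∈ 𝒮, 0 ≤ X S) {s : ℝ}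
    (hs : 0 ≤ s) :
    #𝒮 * (min s a - √s) ≤ ∑ S ∈ 𝒮, min s (X S) := by
  rcases le_total s 1 with hs1 | hs1
  · have : min s a - √s ≤ 0 := by
      linarith [min_le_left s a, Real.le_sqrt_self_iff.2 hs1]
    exact (mul_nonpos_of_nonneg_of_nonpos (Nat.cast_nonneg _) this).trans
      (sum_nonneg fun S hS => le_min hs (hX S hS))
  · have hmin : ∀ x : ℝ, min s x = x - max (x - s) 0 := fun x => by
      rcases le_total s x with h | h <;> simp [h]
    have := sum_max_sub_le_of_moments 𝒮 X hmean hsq hs1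
    simp only [hmin, sum_sub_distrib, hmean]
    linarith

lemma sum_min_le_of_mean (s : ℝ) (hmean : ∑ S ∈ 𝒮, X S = #𝒮 * a) :
    ∑ S ∈ 𝒮, min s (X S) ≤ #𝒮 * min s a := by
  rw [mul_min_of_nonneg _ _ (Nat.cast_nonneg _), ← hmean, ← nsmul_eq_mul, ← sum_const]
  exact le_min (sum_le_sum fun S _ => min_le_left _ _) (sum_le_sum fun S _ => min_le_right _ _)

end MomentBounds

section RandomSubset

variable {α : Type*} [Fintype α] [DecidableEq α]

lemma choose_mul_card_filter_powersetCard_subset (m : ℕ) (A : Finset α) :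
    (Fintype.card α).choose #A * #{S ∈ powersetCard m univ | A ⊆ S}
      = (Fintype.card α).choose m * m.choose #A := by
  rcases le_or_gt #A m with hA | hA
  · rw [card_filter_powersetCard_subset A univ m (subset_univ A) hA, card_univ,
      ← Nat.choose_mul hA]
  · have hempty : ({S ∈ powersetCard m univ | A ⊆ S} : Finset (Finset α)) = ∅ := by
      refine filter_eq_empty_iff.2 fun S hS hAS => ?_
      have := card_le_card hAS
      rw [mem_powersetCard_univ.1 hS] at this
      omega
    simp [hempty, Nat.choose_eq_zero_of_lt hA]

lemma choose_mul_sum_choose_card_inter (m k : ℕ) (T : Finset α) :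
    (Fintype.card α).choose k * ∑ S ∈ powersetCard m univ, (#(S ∩ T)).choose k
      = (Fintype.card α).choose m * m.choose k * (#T).choose k := by
  have hpairs : ∑ S ∈ powersetCard m univ, (#(S ∩ T)).choose k
      = ∑ A ∈ powersetCard k T, #{S ∈ powersetCard m univ | A ⊆ S} := by
    have h := sum_card_bipartiteAbove_eq_sum_card_bipartiteBelow (s := powersetCard k T)
      (t := powersetCard m (univ : Finset α)) (r := fun A S => A ⊆ S)
    unfold bipartiteAbove bipartiteBelow at h
    rw [h]
    refine sum_congr rfl fun S _ => ?_
    rw [← card_powersetCard]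
    congr 1
    ext A
    simp [mem_powersetCard, subset_inter_iff, and_comm, and_assoc]
  have hterm : ∀ A ∈ powersetCard k T, (Fintype.card α).choose k
      * #{S ∈ powersetCard m univ | A ⊆ S} = (Fintype.card α).choose m * m.choose k := by
    intro A hA
    obtain ⟨-, rfl⟩ := mem_powersetCard.1 hA
    exact choose_mul_card_filter_powersetCard_subset m A
  rw [hpairs, mul_sum, sum_congr rfl hterm, sum_const, card_powersetCard, smul_eq_mul]
  ring

variable (m : ℕ) (T : Finset α)

lemma sum_card_inter_eq [Nonempty α] :
    ∑ S ∈ powersetCard m univ, (#(S ∩ T) : ℝ)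
      = (Fintype.card α).choose m * (m * #T / Fintype.card α) := by
  have h := choose_mul_sum_choose_card_inter m 1 T
  simp only [Nat.choose_one_right] at h
  have hN : (Fintype.card α : ℝ) ≠ 0 := by positivity
  rw [mul_div_assoc', eq_div_iff hN]
  have h' := congrArg (Nat.cast : ℕ → ℝ) h
  push_cast at h'
  linear_combination h'

lemma sum_card_inter_mul_sub_one_le [Nonempty α] (hm : m ≤ Fintype.card α) :
    ∑ S ∈ powersetCard m univ, (#(S ∩ T) : ℝ) * (#(S ∩ T) - 1)
      ≤ (Fintype.card α).choose m * (m * #T / Fintype.card α) ^ 2 := by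
  rcases le_or_gt #T 1 with hT | hT
  · refine (sum_nonpos fun S _ => ?_).trans (by positivity)
    have : (#(S ∩ T) : ℝ) ≤ 1 := by exact_mod_cast (card_le_card inter_subset_right).trans hT
    nlinarith [(#(S ∩ T)).cast_nonneg (α := ℝ)]
  · have hTN : #T ≤ Fintype.card α := card_le_univ T
    have hN : (2 : ℝ) ≤ Fintype.card α := by exact_mod_cast (show 2 ≤ Fintype.card α by omega)
    have h := choose_mul_sum_choose_card_inter m 2 T
    have hR : (Fintype.card α : ℝ) * (Fintype.card α - 1)
        * ∑ S ∈ powersetCard m univ, (#(S ∩ T) : ℝ) * (#(S ∩ T) - 1)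
        = (Fintype.card α).choose m * (m * (m - 1)) * (#T * (#T - 1)) := by
      have := congrArg (fun x : ℕ => (x : ℝ) * 4) h
      simp only [Nat.cast_mul, Nat.cast_sum, Nat.cast_choose_two] at this
      rw [← sum_div] at this
      linear_combination this
    have hmN : (m : ℝ) ≤ Fintype.card α := by exact_mod_cast hm
    have hm2 : (0 : ℝ) ≤ m * (m - 1) := by
      have := Nat.cast_choose_two ℝ m
      linarith [(m.choose 2).cast_nonneg (α := ℝ)]
    have hgap : 0 ≤ ((Fintype.card α).choose m : ℝ)
        * (m * #T ^ 2 * (Fintype.card α - m) + #T * Fintype.card α * (m * (m - 1))) := by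
      have : (0 : ℝ) ≤ Fintype.card α - m := by linarith
      positivity
    rw [div_pow, mul_div_assoc', le_div_iff₀ (by positivity)]
    nlinarith

lemma sum_min_card_inter_mem_Icc [Nonempty α] (hm : m ≤ Fintype.card α) {s : ℝ} (hs : 0 ≤ s) :
    ∑ S ∈ powersetCard m univ, min s (#(S ∩ T) : ℝ)
      ∈ Set.Icc ((Fintype.card α).choose m * (min s (m * #T / Fintype.card α) - √s))
        ((Fintype.card α).choose m * min s (m * #T / Fintype.card α)) := by
  have hcard : ((powersetCard m (univ : Finset α)).card : ℝ) = (Fintype.card α).choose m := by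
    rw [card_powersetCard, card_univ]
  have hmean := sum_card_inter_eq m T
  rw [← hcard] at hmean ⊢
  have hsq : ∑ S ∈ powersetCard m univ, (#(S ∩ T) : ℝ) ^ 2
      ≤ #(powersetCard m (univ : Finset α))
        * ((m * #T / Fintype.card α) ^ 2 + m * #T / Fintype.card α) := by
    have h := sum_card_inter_mul_sub_one_le m T hm
    rw [← hcard] at h
    have : ∀ S ∈ powersetCard m univ, (#(S ∩ T) : ℝ) ^ 2 = #(S ∩ T) * (#(S ∩ T) - 1) + #(S ∩ T) :=
      fun S _ => by ring
    rw [sum_congr rfl this, sum_add_distrib, hmean]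
    linarith
  exact ⟨le_sum_min_of_moments _ _ hmean hsq (fun S _ => Nat.cast_nonneg _) hs,
    sum_min_le_of_mean _ _ s hmean⟩

end RandomSubset

section Minibatch

variable {α : Type*} [Fintype α] [DecidableEq α] [Nonempty α]

lemma sum_min_card_filter_le_mem_Icc (f : α → ℝ) {m : ℕ} {θ : ℝ} (hθ : 0 ≤ θ)
    (hmn : m ≤ Fintype.card α) (u : ℝ) :
    ∑ S ∈ powersetCard m univ, min (θ * m) (#{i ∈ S | u ≤ f i} : ℝ)
      ∈ Set.Icc ((Fintype.card α).choose m * (m / Fintype.card α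
          * min (θ * Fintype.card α) (#{i | u ≤ f i} : ℝ) - √(θ * m)))
        ((Fintype.card α).choose m
          * (m / Fintype.card α * min (θ * Fintype.card α) (#{i | u ≤ f i} : ℝ))) := by
  have hscale : ∀ K : ℝ, min (θ * m) (m * K / Fintype.card α)
      = m / Fintype.card α * min (θ * Fintype.card α) K := fun K => by
    rw [mul_min_of_nonneg _ _ (by positivity)]
    congr 1 <;> field_simp
  have hcount : ∀ S : Finset α, {i ∈ S | u ≤ f i} = S ∩ ({i | u ≤ f i} : Finset α) := fun S => by
    rw [inter_filter, inter_univ]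
  have := sum_min_card_inter_mem_Icc m ({i | u ≤ f i} : Finset α) hmn (by positivity : 0 ≤ θ * m)
  simpa only [← hcount, ← hscale] using this

lemma sum_tailMean_powersetCard_mem_Icc (f : α → ℝ) {m : ℕ} {θ B : ℝ} (hθ : 0 < θ) (hm : 0 < m)
    (hmn : m ≤ Fintype.card α) (hB : 0 ≤ B) :
    ∑ S ∈ powersetCard m univ, tailMean S f (θ * m) B
      ∈ Set.Icc ((Fintype.card α).choose m
          * (tailMean univ f (θ * Fintype.card α) B - B / √(θ * m)))
        ((Fintype.card α).choose m * tailMean univ f (θ * Fintype.card α) B) := by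
  set N : ℝ := (Fintype.card α : ℝ)
  set C : ℝ := ((Fintype.card α).choose m : ℝ)
  have hN : 0 < N := by positivity
  have hs : 0 < θ * m := by positivity
  have hpt := sum_min_card_filter_le_mem_Icc f hθ.le hmn
  set I := ∫ u in (0 : ℝ)..B, min (θ * N) (#{i | u ≤ f i} : ℝ)
  have hint : ∀ (S : Finset α) (c : ℝ),
      IntervalIntegrable (fun u => min c (#{i ∈ S | u ≤ f i} : ℝ)) volume 0 B :=
    fun S c => (antitone_min_card_filter_le S f c).intervalIntegrable
  have hsumint : IntervalIntegrable (fun u => ∑ S ∈ powersetCard m univ,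
      min (θ * m) (#{i ∈ S | u ≤ f i} : ℝ)) volume 0 B :=
    Antitone.intervalIntegrable fun u v huv =>
      sum_le_sum fun S _ => antitone_min_card_filter_le S f _ huv
  set J := ∫ u in (0 : ℝ)..B, ∑ S ∈ powersetCard m univ, min (θ * m) (#{i ∈ S | u ≤ f i} : ℝ)
    with hJ
  have hsum : ∑ S ∈ powersetCard m univ, tailMean S f (θ * m) B = (θ * m)⁻¹ * J := by
    rw [hJ, intervalIntegral.integral_finsetSum fun S _ => hint S _, mul_sum]
    rfl
  have hupper : J ≤ C * (m / N * I) := by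
    rw [← intervalIntegral.integral_const_mul, ← intervalIntegral.integral_const_mul]
    exact intervalIntegral.integral_mono_on hB hsumint
      (((hint univ _).const_mul _).const_mul _) fun u _ => (hpt u).2
  have hlower : C * (m / N * I - B * √(θ * m)) ≤ J := by
    have : C * (m / N * I - B * √(θ * m)) = ∫ u in (0 : ℝ)..B,
        C * (m / N * min (θ * N) (#{i | u ≤ f i} : ℝ) - √(θ * m)) := by
      rw [intervalIntegral.integral_const_mul, intervalIntegral.integral_sub
        ((hint univ _).const_mul _) intervalIntegrable_const, intervalIntegral.integral_const_mul,
        intervalIntegral.integral_const, smul_eq_mul, sub_zero]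
    rw [this]
    exact intervalIntegral.integral_mono_on hB
      ((((hint univ _).const_mul _).sub intervalIntegrable_const).const_mul _)
      hsumint fun u _ => (hpt u).1
  have hroot : √(θ * m) ^ 2 = θ * m := Real.sq_sqrt hs.le
  have hroot0 : 0 < √(θ * m) := Real.sqrt_pos.2 hs
  rw [hsum, tailMean]
  constructor
  · calc C * ((θ * N)⁻¹ * I - B / √(θ * m)) = (θ * m)⁻¹ * (C * (m / N * I - B * √(θ * m))) := by
          field_simp
          linear_combination (C * N * B) * hroot
      _ ≤ _ := mul_le_mul_of_nonneg_left hlower (by positivity)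
  · calc (θ * m)⁻¹ * _ ≤ (θ * m)⁻¹ * (C * (m / N * I)) :=
          mul_le_mul_of_nonneg_left hupper (by positivity)
      _ = C * ((θ * N)⁻¹ * I) := by field_simp

end Minibatch

theorem bias_of_minibatch_smoothed_superquantile_general
    (d n m : ℕ) (hm : 0 < m) (hmn : m ≤ n)
    (θ lam ν B : ℝ) (hθ : θ ∈ Set.Ioc (0:ℝ) 1) (hν : 0 < ν) (hB : 0 ≤ B)
    (F : Fin n → EuclideanSpace ℝ (Fin d) → ℝ)
    (hFB : ∀ i v, F i v ∈ Set.Icc (0:ℝ) B)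
    (w : EuclideanSpace ℝ (Fin d)) :
    |(∑ S ∈ Finset.univ.filter (fun S : Finset (Fin n) => S.card = m),
        sSup {x : ℝ | ∃ π : Fin n → ℝ, (∀ i, 0 ≤ π i) ∧ (∀ i ∉ S, π i = 0) ∧
          (∑ i ∈ S, π i = 1) ∧ (∀ i, π i ≤ 1 / (θ * m)) ∧
          x = (∑ i ∈ S, π i * (F i w + lam / 2 * ‖w‖ ^ 2))
            - ν * ∑ i ∈ S, π i * Real.log (π i * m)})
        / (n.choose m : ℝ)
      - sSup {x : ℝ | ∃ π : Fin n → ℝ, (∀ i, 0 ≤ π i) ∧ (∑ i, π i = 1) ∧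
          (∀ i, π i ≤ 1 / (θ * n)) ∧ x = ∑ i, π i * (F i w + lam / 2 * ‖w‖ ^ 2)}|
      ≤ B / Real.sqrt (θ * m) + 2 * ν * Real.log m := by
  obtain ⟨hθ0, hθ1⟩ := hθ
  have : Nonempty (Fin n) := ⟨⟨0, hm.trans_le hmn⟩⟩
  have hC : (0 : ℝ) < n.choose m := by exact_mod_cast Nat.choose_pos hmn
  have hlog : 0 ≤ Real.log m := Real.log_nonneg (by exact_mod_cast hm)
  have hn : (0 : ℝ) < n := by exact_mod_cast hm.trans_le hmn
  have hsub := fun S (hS : S ∈ powersetCard m univ) =>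
    sSup_cappedSimplex_sub_entropy_mem_Icc S (F · w) (mem_powersetCard_univ.1 hS)
      (fun i _ => hFB i w) (by positivity) (mul_le_of_le_one_left (Nat.cast_nonneg m) hθ1) hν.le
      (lam / 2 * ‖w‖ ^ 2)
  have hlow := sum_le_sum fun S hS => (hsub S hS).1
  have hupp := sum_le_sum fun S hS => (hsub S hS).2
  have havg := sum_tailMean_powersetCard_mem_Icc (F · w) hθ0 hm (by simpa using hmn) hB
  simp only [sum_add_distrib, sum_sub_distrib, sum_const, card_powersetCard, card_univ,
    Fintype.card_fin, nsmul_eq_mul] at hlow hupp havg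
  rw [show univ.filter (fun S : Finset (Fin n) => #S = m) = powersetCard m univ by ext; simp,
    sSup_cappedSimplex_eq (F · w) (fun i => hFB i w) (by positivity)
      (by simpa using mul_le_of_le_one_left (Nat.cast_nonneg n) hθ1),
    abs_le, le_sub_iff_add_le, le_div_iff₀ hC, sub_le_iff_le_add, div_le_iff₀ hC]
  constructor <;> nlinarith [havg.1, havg.2, mul_nonneg hC.le (mul_nonneg hν.le hlog)]

/-- Bias bound for the smoothed minibatch superquantile: with `F̃_i = F_i + (λ/2)‖·‖²`,
`F_θ(w) = max_{π ∈ P_θ} ∑ π i F̃ i w`, and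
`F̄_θ^ν(w) = E_{S ∼ U_m}[max_{π ∈ P_{θ,S}} (∑_{i∈S} π i F̃ i w − ν D_S(π))]`
(the expectation being the average over all subsets of size `m`),
one has `|F̄_θ^ν(w) − F_θ(w)| ≤ B/√(θm) + 2ν log m`. -/
theorem bias_of_minibatch_smoothed_superquantile
    (d n m : ℕ) (hn : 0 < n) (hm : 0 < m) (hmn : m ≤ n)
    (θ lam ν B : ℝ) (hθ : θ ∈ Set.Ioc (0:ℝ) 1) (hlam : 0 ≤ lam) (hν : 0 < ν) (hB : 0 ≤ B)
    (F : Fin n → EuclideanSpace ℝ (Fin d) → ℝ)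
    (hFB : ∀ i v, F i v ∈ Set.Icc (0:ℝ) B)
    (w : EuclideanSpace ℝ (Fin d)) :
    |(∑ S ∈ Finset.univ.filter (fun S : Finset (Fin n) => S.card = m),
        sSup {x : ℝ | ∃ π : Fin n → ℝ, (∀ i, 0 ≤ π i) ∧ (∀ i ∉ S, π i = 0) ∧
          (∑ i ∈ S, π i = 1) ∧ (∀ i, π i ≤ 1 / (θ * m)) ∧
          x = (∑ i ∈ S, π i * (F i w + lam / 2 * ‖w‖ ^ 2))
            - ν * ∑ i ∈ S, π i * Real.log (π i * m)})
        / (n.choose m : ℝ)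
      - sSup {x : ℝ | ∃ π : Fin n → ℝ, (∀ i, 0 ≤ π i) ∧ (∑ i, π i = 1) ∧
          (∀ i, π i ≤ 1 / (θ * n)) ∧ x = ∑ i, π i * (F i w + lam / 2 * ‖w‖ ^ 2)}|
      ≤ B / Real.sqrt (θ * m) + 2 * ν * Real.log m :=
  bias_of_minibatch_smoothed_superquantile_general d n m hm hmn θ lam ν B hθ hν hB F hFB w
end

section
/- Let F_1,…,F_n : ℝ^d → ℝ be G-Lipschitz and L-smooth, let θ ∈ (0,1], λ ≥ 0, ν > 0, let S ⊆ {1,…,n} with |S| = m, and set F̃_i(w) = F_i(w) + (λ/2)‖w‖². Then the smoothed partial superquantile F_{θ,S}^ν(w) = max_{π∈P_{θ,S}} ( ∑_{i∈S} π_i F̃_i(w) − ν D_S(π) ) has, for each w, a unique maximizer π*(w), is continuously differentiable with ∇F_{θ,S}^ν(w) = ∑_{i∈S} π*_i(w) ∇F̃_i(w), and is L'-smooth (its gradient is L'-Lipschitz) with L' = L + λ + G²/ν. -/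
/-!
For fixed `v` the objective `π ↦ ∑ π_i F̃_i(v) - ν D_S(π)` is continuous on the compact convex set
`P_{θ,S}`, so it has a maximiser. If `π, π'` are maximisers for payoff vectors `u, u'`, the tangent
inequality for `x log x` at the points `(1-t)π + tπ'` and `(1-t)π' + tπ`, together with the
symmetrised Pinsker inequality `(∑|a-b|)² ≤ ∑ (a-b)(log a - log b)`, gives in the limit `t → 0`
`ν ‖π - π'‖₁² ≤ ⟨π - π', u - u'⟩`. This yields uniqueness and, since the term `λ/2‖v‖²` shifts all
payoffs equally, `‖π*(v) - π*(w)‖₁ ≤ G‖v - w‖/ν`. Maximality at `v` and at `w` sandwiches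
`h w - h v` between `∑ π*_i(v) (F̃_i w - F̃_i v)` and `∑ π*_i(w) (F̃_i w - F̃_i v)`; continuity of
`π*` makes the gap `o(‖w - v‖)` (Danskin's theorem), and the `ℓ¹` bound on `π*` gives the
Lipschitz constant `L + λ + G²/ν` of the gradient.
-/

open Finset Filter Topology Asymptotics InnerProductSpace

lemma mul_log_mul_tangent_le {x y c : ℝ} (hx : 0 ≤ x) (hy : 0 < y ∨ y = x) (hc : c ≠ 0) :
    y * Real.log (y * c) + (x - y) * (Real.log (y * c) + 1) ≤ x * Real.log (x * c) := by
  rcases hy with hy | rfl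
  · rcases hx.eq_or_lt with rfl | hx
    · simp only [zero_mul, Real.log_zero, mul_zero]
      linarith
    · have h := Real.one_sub_inv_le_log_of_pos (div_pos hx hy)
      rw [Real.log_div hx.ne' hy.ne', inv_div] at h
      have key := mul_le_mul_of_nonneg_left h hx.le
      rw [mul_one_sub, mul_div_cancel₀ _ hx.ne'] at key
      rw [Real.log_mul hx.ne' hc, Real.log_mul hy.ne' hc]
      nlinarith
  · simp

lemma two_mul_sq_div_add_le_mul_log_sub_log {a b : ℝ} (ha : 0 < a) (hb : 0 < b) :
    2 * (a - b) ^ 2 / (a + b) ≤ (a - b) * (Real.log a - Real.log b) := by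
  set x := (a - b) / (a + b) with hx
  have hab : 0 < a + b := add_pos ha hb
  have hx1 : |x| < 1 := by
    rw [abs_lt, hx, lt_div_iff₀ hab, div_lt_iff₀ hab]; constructor <;> linarith
  have hlog : Real.log (1 + x) - Real.log (1 - x) = Real.log a - Real.log b := by
    have h1 : 1 + x = 2 * a / (a + b) := by rw [hx]; field_simp; ring
    have h2 : 1 - x = 2 * b / (a + b) := by rw [hx]; field_simp; ring
    rw [h1, h2, ← Real.log_div (by positivity) (by positivity)]
    rw [← Real.log_div ha.ne' hb.ne']; congr 1; field_simp
  have hsum := (Real.hasSum_log_sub_log_of_abs_lt_one hx1).mul_left x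
  rw [hlog] at hsum
  have h0 := le_hasSum hsum 0 fun k _ => by
    rw [← mul_assoc, mul_comm x, mul_assoc, ← pow_succ',
      show 2 * k + 1 + 1 = 2 * (k + 1) by ring, pow_mul]
    positivity
  simp only [Nat.cast_zero, mul_zero, zero_add, div_one, mul_one, pow_one] at h0
  calc 2 * (a - b) ^ 2 / (a + b) = (a + b) * (x * (2 * x)) := by rw [hx]; field_simp
    _ ≤ (a + b) * (x * (Real.log a - Real.log b)) := mul_le_mul_of_nonneg_left h0 hab.le
    _ = (a - b) * (Real.log a - Real.log b) := by rw [hx]; field_simp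

lemma sq_sum_abs_sub_le_sum_mul_log_sub_log {ι : Type*} (S : Finset ι) {a b : ι → ℝ}
    (hab : ∀ i ∈ S, 0 < a i ∧ 0 < b i ∨ a i = 0 ∧ b i = 0)
    (hsa : ∑ i ∈ S, a i = 1) (hsb : ∑ i ∈ S, b i = 1) :
    (∑ i ∈ S, |a i - b i|) ^ 2 ≤ ∑ i ∈ S, (a i - b i) * (Real.log (a i) - Real.log (b i)) := by
  have hnn : ∀ i ∈ S, 0 ≤ a i + b i ∧ 0 ≤ 2 * (a i - b i) ^ 2 / (a i + b i) := fun i hi => by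
    rcases hab i hi with ⟨ha, hb⟩ | ⟨ha, hb⟩
    · constructor <;> positivity
    · simp [ha, hb]
  have cs := sum_sq_le_sum_mul_sum_of_sq_le_mul S (r := fun i => |a i - b i|)
    (f := fun i => (a i + b i) / 2) (g := fun i => 2 * (a i - b i) ^ 2 / (a i + b i))
    (fun i hi => by linarith [(hnn i hi).1]) (fun i hi => (hnn i hi).2) fun i hi => by
      rcases hab i hi with ⟨ha, hb⟩ | ⟨ha, hb⟩
      · rw [sq_abs]; field_simp; rfl
      · simp [ha, hb] -- `g i` is the junk value `0 / 0 = 0`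
  rw [← sum_div, sum_add_distrib, hsa, hsb, one_add_one_eq_two, div_self two_ne_zero,
    one_mul] at cs
  refine cs.trans (sum_le_sum fun i hi => ?_)
  rcases hab i hi with ⟨ha, hb⟩ | ⟨ha, hb⟩
  · exact two_mul_sq_div_add_le_mul_log_sub_log ha hb
  · simp [ha, hb]

section EntropicMaximization

variable {ι : Type*} (S : Finset ι)

def simplexOn : Set (ι → ℝ) :=
  {π | (∀ i, 0 ≤ π i) ∧ (∀ i ∉ S, π i = 0) ∧ ∑ i ∈ S, π i = 1}

def cappedSimplexOn (cap : ℝ) : Set (ι → ℝ) :=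
  {π | (∀ i, 0 ≤ π i) ∧ (∀ i ∉ S, π i = 0) ∧ ∑ i ∈ S, π i = 1 ∧ ∀ i, π i ≤ cap}

/-- `c` is the normalisation `m = |S|` in `D_S(π) = ∑ π_i log (π_i m)`. -/
noncomputable def entropicObjective (ν c : ℝ) (u π : ι → ℝ) : ℝ :=
  ∑ i ∈ S, π i * u i - ν * ∑ i ∈ S, π i * Real.log (π i * c)

variable {S} {ν c : ℝ} {K : Set (ι → ℝ)}

lemma entropicObjective_sub_entropicObjective (u u' π : ι → ℝ) :
    entropicObjective S ν c u' π - entropicObjective S ν c u π = ∑ i ∈ S, π i * (u' i - u i) := by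
  simp only [entropicObjective, mul_sub, sum_sub_distrib]
  ring

lemma continuous_entropicObjective (hc : c ≠ 0) (u : ι → ℝ) :
    Continuous (entropicObjective S ν c u) := by
  have hlog : ∀ i, Continuous fun π : ι → ℝ => π i * Real.log (π i * c) := fun i => by
    have h : (fun π : ι → ℝ => π i * Real.log (π i * c))
        = fun π => c⁻¹ * ((π i * c) * Real.log (π i * c)) := by
      funext π; field_simp
    rw [h]
    exact continuous_const.mul
      (Real.continuous_mul_log.comp ((continuous_apply i).mul continuous_const))
  unfold entropicObjective
  fun_prop

lemma exists_isMaxOn_entropicObjective (hK : IsCompact K) (hKne : K.Nonempty) (hc : c ≠ 0)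
    (u : ι → ℝ) : ∃ π ∈ K, IsMaxOn (entropicObjective S ν c u) K π :=
  hK.exists_isMaxOn hKne (continuous_entropicObjective hc u).continuousOn

lemma sum_sub_mul_le_of_isMaxOn (hKS : K ⊆ simplexOn S) (hν : 0 ≤ ν) (hc : c ≠ 0)
    {u π p : ι → ℝ} (hπ : π ∈ K) (hmax : IsMaxOn (entropicObjective S ν c u) K π) (hp : p ∈ K)
    (hpos : ∀ i ∈ S, 0 < p i ∨ p i = π i) :
    ∑ i ∈ S, (p i - π i) * u i ≤ ν * ∑ i ∈ S, (p i - π i) * Real.log (p i * c) := by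
  have hsum : ∑ i ∈ S, (p i - π i) = 0 := by
    rw [sum_sub_distrib, (hKS hp).2.2, (hKS hπ).2.2, sub_self]
  have htangent : ∑ i ∈ S, (p i * Real.log (p i * c) - π i * Real.log (π i * c))
      ≤ ∑ i ∈ S, (p i - π i) * Real.log (p i * c) := by
    calc _ ≤ ∑ i ∈ S, (p i - π i) * (Real.log (p i * c) + 1) := sum_le_sum fun i hi => by
          linarith [mul_log_mul_tangent_le ((hKS hπ).1 i) (hpos i hi) hc]
      _ = _ := by simp only [mul_add, mul_one, sum_add_distrib, hsum, add_zero]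
  have hgain : entropicObjective S ν c u p - entropicObjective S ν c u π
      = ∑ i ∈ S, (p i - π i) * u i
        - ν * ∑ i ∈ S, (p i * Real.log (p i * c) - π i * Real.log (π i * c)) := by
    simp only [entropicObjective, sub_mul, sum_sub_distrib]
    ring
  have hle : entropicObjective S ν c u p ≤ entropicObjective S ν c u π := hmax hp
  linarith [mul_le_mul_of_nonneg_left htangent hν]

lemma sum_sub_mul_le_of_isMaxOn_segment (hK : Convex ℝ K) (hKS : K ⊆ simplexOn S) (hν : 0 ≤ ν)
    (hc : c ≠ 0) {u π π' : ι → ℝ} (hπ : π ∈ K) (hmax : IsMaxOn (entropicObjective S ν c u) K π)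
    (hπ' : π' ∈ K) {t : ℝ} (ht0 : 0 < t) (ht1 : t < 1)
    (hpos : ∀ i ∈ S, 0 < (1 - t) * π i + t * π' i ∨ π' i = π i) :
    ∑ i ∈ S, (π' i - π i) * u i
      ≤ ν * ∑ i ∈ S, (π' i - π i) * Real.log (((1 - t) * π i + t * π' i) * c) := by
  have hp : (1 - t) • π + t • π' ∈ K := hK hπ hπ' (by linarith) ht0.le (by ring)
  have h := sum_sub_mul_le_of_isMaxOn hKS hν hc hπ hmax hp fun i hi => by
    rcases hpos i hi with h | h
    · exact Or.inl h
    · right; simp only [Pi.add_apply, Pi.smul_apply, smul_eq_mul, h]; ring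
  simp only [Pi.add_apply, Pi.smul_apply, smul_eq_mul,
    show ∀ i, (1 - t) * π i + t * π' i - π i = t * (π' i - π i) from fun i => by ring,
    mul_assoc, ← mul_sum] at h
  rw [mul_left_comm] at h
  exact le_of_mul_le_mul_left h ht0

lemma one_sub_mul_add_mul_pos_or_eq_zero {x y t : ℝ} (hx : 0 ≤ x) (hy : 0 ≤ y) (ht0 : 0 < t)
    (ht1 : t < 1) : 0 < (1 - t) * x + t * y ∧ 0 < (1 - t) * y + t * x ∨ x = 0 ∧ y = 0 := by
  rcases hx.eq_or_lt with rfl | hx <;> rcases hy.eq_or_lt with rfl | hy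
  · exact Or.inr ⟨rfl, rfl⟩
  all_goals exact Or.inl ⟨by nlinarith, by nlinarith⟩

lemma sum_sub_mul_log_sub_le_of_isMaxOn (hK : Convex ℝ K) (hKS : K ⊆ simplexOn S) (hν : 0 ≤ ν)
    (hc : c ≠ 0) {u u' π π' : ι → ℝ} (hπ : π ∈ K) (hπ' : π' ∈ K)
    (hmax : IsMaxOn (entropicObjective S ν c u) K π)
    (hmax' : IsMaxOn (entropicObjective S ν c u') K π') {t : ℝ} (ht0 : 0 < t) (ht1 : t < 1) :
    ν * ∑ i ∈ S, (π i - π' i) * (Real.log (((1 - t) * π i + t * π' i) * c)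
        - Real.log (((1 - t) * π' i + t * π i) * c))
      ≤ ∑ i ∈ S, (π i - π' i) * (u i - u' i) := by
  have hsupp i := one_sub_mul_add_mul_pos_or_eq_zero ((hKS hπ).1 i) ((hKS hπ').1 i) ht0 ht1
  have h := sum_sub_mul_le_of_isMaxOn_segment hK hKS hν hc hπ hmax hπ' ht0 ht1
    fun i _ => (hsupp i).imp (·.1) fun h => by rw [h.1, h.2]
  have h' := sum_sub_mul_le_of_isMaxOn_segment hK hKS hν hc hπ' hmax' hπ ht0 ht1
    fun i _ => (hsupp i).imp (·.2) fun h => by rw [h.1, h.2]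
  have hu : ∑ i ∈ S, (π' i - π i) * u i + ∑ i ∈ S, (π i - π' i) * u' i
      = -∑ i ∈ S, (π i - π' i) * (u i - u' i) := by
    rw [← sum_add_distrib, ← sum_neg_distrib]; exact sum_congr rfl fun i _ => by ring
  have hlog : ∑ i ∈ S, (π' i - π i) * Real.log (((1 - t) * π i + t * π' i) * c)
        + ∑ i ∈ S, (π i - π' i) * Real.log (((1 - t) * π' i + t * π i) * c)
      = -∑ i ∈ S, (π i - π' i) * (Real.log (((1 - t) * π i + t * π' i) * c)
        - Real.log (((1 - t) * π' i + t * π i) * c)) := by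
    rw [← sum_add_distrib, ← sum_neg_distrib]; exact sum_congr rfl fun i _ => by ring
  linear_combination h + h' - hu + ν * hlog

/-- The two maximisers are compared at `p = (1-t)π + tπ'` and `q = (1-t)π' + tπ`, for which
`p - q = (1 - 2t)(π - π')`. -/
lemma entropic_stability_of_lt_half (hK : Convex ℝ K) (hKS : K ⊆ simplexOn S) (hν : 0 ≤ ν)
    (hc : c ≠ 0) {u u' π π' : ι → ℝ} (hπ : π ∈ K) (hπ' : π' ∈ K)
    (hmax : IsMaxOn (entropicObjective S ν c u) K π)
    (hmax' : IsMaxOn (entropicObjective S ν c u') K π') {t : ℝ} (ht0 : 0 < t) (ht : t < 1 / 2) :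
    ν * (1 - 2 * t) * (∑ i ∈ S, |π i - π' i|) ^ 2 ≤ ∑ i ∈ S, (π i - π' i) * (u i - u' i) := by
  obtain ⟨hπ0, -, hπ1⟩ := hKS hπ
  obtain ⟨hπ'0, -, hπ'1⟩ := hKS hπ'
  set p : ι → ℝ := fun i => (1 - t) * π i + t * π' i
  set q : ι → ℝ := fun i => (1 - t) * π' i + t * π i
  have hsupp i := one_sub_mul_add_mul_pos_or_eq_zero (hπ0 i) (hπ'0 i) ht0 (by linarith)
  have hpinsker := sq_sum_abs_sub_le_sum_mul_log_sub_log S (a := p) (b := q)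
    (fun i _ => (hsupp i).imp id fun h => by simp [p, q, h.1, h.2])
    (by simp only [p, sum_add_distrib, ← mul_sum, hπ1, hπ'1]; ring)
    (by simp only [q, sum_add_distrib, ← mul_sum, hπ1, hπ'1]; ring)
  have habs : ∑ i ∈ S, |p i - q i| = (1 - 2 * t) * ∑ i ∈ S, |π i - π' i| := by
    rw [mul_sum]
    refine sum_congr rfl fun i _ => ?_
    rw [show p i - q i = (1 - 2 * t) * (π i - π' i) by ring, abs_mul,
      abs_of_pos (by linarith : 0 < 1 - 2 * t)]
  have hlog : ∑ i ∈ S, (p i - q i) * (Real.log (p i) - Real.log (q i))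
      = (1 - 2 * t) * ∑ i ∈ S, (π i - π' i) * (Real.log (p i * c) - Real.log (q i * c)) := by
    rw [mul_sum]
    refine sum_congr rfl fun i _ => ?_
    rcases hsupp i with ⟨hp, hq⟩ | ⟨h, h'⟩
    · rw [Real.log_mul hp.ne' hc, Real.log_mul hq.ne' hc]; ring
    · simp [p, q, h, h']
  rw [habs, hlog, mul_pow, sq, mul_assoc] at hpinsker
  calc ν * (1 - 2 * t) * (∑ i ∈ S, |π i - π' i|) ^ 2
      = ν * ((1 - 2 * t) * (∑ i ∈ S, |π i - π' i|) ^ 2) := by ring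
    _ ≤ _ := mul_le_mul_of_nonneg_left (le_of_mul_le_mul_left hpinsker (by linarith)) hν
    _ ≤ _ := sum_sub_mul_log_sub_le_of_isMaxOn hK hKS hν hc hπ hπ' hmax hmax' ht0 (by linarith)

theorem entropic_stability (hK : Convex ℝ K) (hKS : K ⊆ simplexOn S) (hν : 0 ≤ ν) (hc : c ≠ 0)
    {u u' π π' : ι → ℝ} (hπ : π ∈ K) (hπ' : π' ∈ K)
    (hmax : IsMaxOn (entropicObjective S ν c u) K π)
    (hmax' : IsMaxOn (entropicObjective S ν c u') K π') :
    ν * (∑ i ∈ S, |π i - π' i|) ^ 2 ≤ ∑ i ∈ S, (π i - π' i) * (u i - u' i) := by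
  set D := ∑ i ∈ S, |π i - π' i|
  have hlim : Tendsto (fun t : ℝ => ν * (1 - 2 * t) * D ^ 2) (𝓝[>] 0) (𝓝 (ν * D ^ 2)) := by
    simpa using ((by fun_prop : Continuous fun t : ℝ => ν * (1 - 2 * t) * D ^ 2).tendsto
      0).mono_left nhdsWithin_le_nhds
  exact le_of_tendsto hlim <| mem_of_superset (Ioo_mem_nhdsGT (by norm_num : (0 : ℝ) < 1 / 2))
    fun t ht => entropic_stability_of_lt_half hK hKS hν hc hπ hπ' hmax hmax' ht.1 ht.2

theorem eq_of_isMaxOn_entropicObjective (hK : Convex ℝ K) (hKS : K ⊆ simplexOn S) (hν : 0 < ν)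
    (hc : c ≠ 0) {u π π' : ι → ℝ} (hπ : π ∈ K) (hmax : IsMaxOn (entropicObjective S ν c u) K π)
    (hπ' : π' ∈ K) (heq : entropicObjective S ν c u π' = entropicObjective S ν c u π) :
    π' = π := by
  have h := entropic_stability hK hKS hν.le hc hπ' hπ (fun q hq => heq ▸ hmax hq) hmax
  simp only [sub_self, mul_zero, sum_const_zero] at h
  have hD : ∑ i ∈ S, |π' i - π i| = 0 :=
    pow_eq_zero_iff two_ne_zero |>.1 <| le_antisymm (nonpos_of_mul_nonpos_right h hν) (sq_nonneg _)
  funext i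
  by_cases hi : i ∈ S
  · exact sub_eq_zero.1 <| abs_eq_zero.1 <|
      (sum_eq_zero_iff_of_nonneg fun _ _ => abs_nonneg _).1 hD i hi
  · rw [(hKS hπ).2.1 i hi, (hKS hπ').2.1 i hi]

theorem entropic_l1_le (hK : Convex ℝ K) (hKS : K ⊆ simplexOn S) (hν : 0 < ν) (hc : c ≠ 0)
    {u u' π π' : ι → ℝ} (hπ : π ∈ K) (hπ' : π' ∈ K)
    (hmax : IsMaxOn (entropicObjective S ν c u) K π)
    (hmax' : IsMaxOn (entropicObjective S ν c u') K π') {a M : ℝ}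
    (hM : ∀ i ∈ S, |u i - u' i - a| ≤ M) :
    ∑ i ∈ S, |π i - π' i| ≤ M / ν := by
  set D := ∑ i ∈ S, |π i - π' i|
  have hshift : ∑ i ∈ S, (π i - π' i) * (u i - u' i)
      = ∑ i ∈ S, (π i - π' i) * (u i - u' i - a) := by
    have h0 : ∑ i ∈ S, (π i - π' i) = 0 := by
      rw [sum_sub_distrib, (hKS hπ).2.2, (hKS hπ').2.2, sub_self]
    simp only [mul_sub _ _ a, sum_sub_distrib, ← sum_mul, h0, zero_mul, sub_zero]
  have hMD : ∑ i ∈ S, (π i - π' i) * (u i - u' i - a) ≤ M * D := by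
    rw [mul_sum]
    refine sum_le_sum fun i hi => ?_
    calc _ ≤ |π i - π' i| * |u i - u' i - a| := (le_abs_self _).trans (abs_mul _ _).le
      _ ≤ M * |π i - π' i| := by rw [mul_comm]; gcongr; exact hM i hi
  have hst := entropic_stability hK hKS hν.le hc hπ hπ' hmax hmax'
  rcases (sum_nonneg fun i _ => abs_nonneg _ : 0 ≤ D).eq_or_lt with hD | hD
  · obtain ⟨j, hj⟩ := nonempty_of_sum_ne_zero ((hKS hπ).2.2 ▸ one_ne_zero : ∑ i ∈ S, π i ≠ 0)
    rw [show D = 0 from hD.symm]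
    exact div_nonneg ((abs_nonneg _).trans (hM j hj)) hν.le
  · rw [le_div_iff₀ hν]
    nlinarith

lemma sum_mul_sub_le_entropicObjective_sub {u u' π π' : ι → ℝ} (hπ : π ∈ K) (hπ' : π' ∈ K)
    (hmax : IsMaxOn (entropicObjective S ν c u) K π)
    (hmax' : IsMaxOn (entropicObjective S ν c u') K π') :
    ∑ i ∈ S, π i * (u' i - u i)
        ≤ entropicObjective S ν c u' π' - entropicObjective S ν c u π ∧
      entropicObjective S ν c u' π' - entropicObjective S ν c u π
        ≤ ∑ i ∈ S, π' i * (u' i - u i) := by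
  have h := entropicObjective_sub_entropicObjective (S := S) (ν := ν) (c := c) u u' π
  have h' := entropicObjective_sub_entropicObjective (S := S) (ν := ν) (c := c) u u' π'
  have hle : entropicObjective S ν c u' π ≤ entropicObjective S ν c u' π' := hmax' hπ
  have hle' : entropicObjective S ν c u π' ≤ entropicObjective S ν c u π := hmax hπ'
  constructor <;> linarith

lemma cappedSimplexOn_subset_simplexOn (cap : ℝ) : cappedSimplexOn S cap ⊆ simplexOn S :=
  fun _ h => ⟨h.1, h.2.1, h.2.2.1⟩

lemma convex_cappedSimplexOn (cap : ℝ) : Convex ℝ (cappedSimplexOn S cap) := by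
  rintro π ⟨h0, hS, h1, hcap⟩ π' ⟨h0', hS', h1', hcap'⟩ a b ha hb hab
  refine ⟨fun i => ?_, fun i hi => ?_, ?_, fun i => ?_⟩ <;>
    simp only [Pi.add_apply, Pi.smul_apply, smul_eq_mul]
  · have := h0 i; have := h0' i; positivity
  · simp [hS i hi, hS' i hi]
  · rw [sum_add_distrib, ← mul_sum, ← mul_sum, h1, h1', mul_one, mul_one, hab]
  · calc _ ≤ a * cap + b * cap := by gcongr <;> simp only [hcap, hcap']
      _ = cap := by rw [← add_mul, hab, one_mul]

lemma isCompact_cappedSimplexOn (cap : ℝ) : IsCompact (cappedSimplexOn S cap) := by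
  refine (isCompact_Icc (a := (0 : ι → ℝ)) (b := fun _ => cap)).of_isClosed_subset ?_
    fun π h => ⟨h.1, h.2.2.2⟩
  simp only [cappedSimplexOn, Set.ofPred_and, Set.ofPred_forall]
  exact (isClosed_iInter fun i => isClosed_le continuous_const (continuous_apply i)).inter <|
    (isClosed_iInter fun i => isClosed_iInter fun _ => isClosed_eq (continuous_apply i)
      continuous_const).inter <|
    (isClosed_eq (continuous_finsetSum _ fun i _ => continuous_apply i) continuous_const).inter <|
    isClosed_iInter fun i => isClosed_le (continuous_apply i) continuous_const

lemma cappedSimplexOn_nonempty {θ : ℝ} (hS : S.Nonempty) (hθ : θ ∈ Set.Ioc 0 1) :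
    (cappedSimplexOn S (1 / (θ * #S))).Nonempty := by
  classical
  have hpos : (0 : ℝ) < #S := by exact_mod_cast hS.card_pos
  have hcap : (#S : ℝ)⁻¹ ≤ 1 / (θ * #S) := by
    rw [one_div, mul_inv]
    exact le_mul_of_one_le_left (by positivity) ((one_le_inv₀ hθ.1).2 hθ.2)
  refine ⟨fun i => if i ∈ S then (#S : ℝ)⁻¹ else 0, fun i => ?_, fun i hi => if_neg hi, ?_,
    fun i => ?_⟩ <;> dsimp only
  · split_ifs <;> positivity
  · rw [sum_ite_mem, inter_self, sum_const, nsmul_eq_mul, mul_inv_cancel₀ hpos.ne']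
  · split_ifs <;> linarith [inv_pos.2 hpos]

lemma sSup_entropicObjective_cappedSimplexOn {cap : ℝ} {u π : ι → ℝ}
    (hπ : π ∈ cappedSimplexOn S cap)
    (hmax : IsMaxOn (entropicObjective S ν c u) (cappedSimplexOn S cap) π) :
    sSup {x | ∃ π : ι → ℝ, (∀ i, 0 ≤ π i) ∧ (∀ i ∉ S, π i = 0) ∧ ∑ i ∈ S, π i = 1 ∧
      (∀ i, π i ≤ cap) ∧ x = entropicObjective S ν c u π} = entropicObjective S ν c u π := by
  obtain ⟨h0, hS, h1, hcap⟩ := hπ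
  refine IsGreatest.csSup_eq ⟨⟨π, h0, hS, h1, hcap, rfl⟩, ?_⟩
  rintro _ ⟨π', h0', hS', h1', hcap', rfl⟩
  exact hmax ⟨h0', hS', h1', hcap'⟩

end EntropicMaximization

theorem hasFDerivAt_of_envelope {E ι : Type*} [NormedAddCommGroup E] [NormedSpace ℝ E]
    (S : Finset ι) {f : ι → E → ℝ} {f' : ι → StrongDual ℝ E} {P : E → ι → ℝ} {h : E → ℝ} {v : E}
    (hf : ∀ i ∈ S, HasFDerivAt (f i) (f' i) v) (hP : ∀ i ∈ S, ContinuousAt (P · i) v)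
    (hlow : ∀ w, ∑ i ∈ S, P v i * (f i w - f i v) ≤ h w - h v)
    (hup : ∀ w, h w - h v ≤ ∑ i ∈ S, P w i * (f i w - f i v)) :
    HasFDerivAt h (∑ i ∈ S, P v i • f' i) v := by
  have hg : HasFDerivAt (fun w => ∑ i ∈ S, P v i * f i w) (∑ i ∈ S, P v i • f' i) v :=
    HasFDerivAt.fun_sum fun i hi => (hf i hi).const_mul (P v i)
  have hcross : ∀ i ∈ S, (fun w => (P w i - P v i) * (f i w - f i v)) =o[𝓝 v] fun w => w - v :=
    fun i hi => by
      have hPo : (fun w => P w i - P v i) =o[𝓝 v] fun _ => (1 : ℝ) :=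
        (isLittleO_one_iff ℝ).2 (by simpa using (hP i hi).tendsto.sub_const (P v i))
      have h := hPo.mul_isBigO (hf i hi).isBigO_sub.norm_right
      simp only [one_mul] at h
      exact h.of_norm_right
  have hrem : HasFDerivAt (fun w => h w - ∑ i ∈ S, P v i * f i w) (0 : StrongDual ℝ E) v := by
    refine HasFDerivAt.of_isLittleO ((isBigO_of_le _ fun w => ?_).trans_isLittleO
      (IsLittleO.fun_sum hcross))
    have hdiff : ∑ i ∈ S, (P w i - P v i) * (f i w - f i v)
        = ∑ i ∈ S, P w i * (f i w - f i v) - ∑ i ∈ S, P v i * (f i w - f i v) := by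
      rw [← sum_sub_distrib]; exact sum_congr rfl fun i _ => by ring
    have hexpand : h w - ∑ i ∈ S, P v i * f i w - (h v - ∑ i ∈ S, P v i * f i v)
        = h w - h v - ∑ i ∈ S, P v i * (f i w - f i v) := by
      simp only [mul_sub, sum_sub_distrib]; ring
    rw [zero_apply, sub_zero, hexpand, Real.norm_eq_abs, Real.norm_eq_abs, hdiff]
    exact abs_le_abs_of_nonneg (by linarith [hlow w]) (by linarith [hup w])
  have h' := hg.fun_add hrem
  rw [add_zero] at h'
  exact h'.congr_of_eventuallyEq (.of_forall fun w => (add_sub_cancel _ _).symm)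

lemma norm_sum_smul_sub_sum_smul_le {E ι : Type*} [SeminormedAddCommGroup E] [NormedSpace ℝ E]
    (S : Finset ι) {p q : ι → ℝ} {x y : ι → E} {z : E} {A B : ℝ} (hp : ∀ i ∈ S, 0 ≤ p i)
    (hp1 : ∑ i ∈ S, p i = 1) (hq1 : ∑ i ∈ S, q i = 1)
    (hxy : ∀ i ∈ S, ‖x i - y i‖ ≤ A) (hyz : ∀ i ∈ S, ‖y i - z‖ ≤ B) :
    ‖∑ i ∈ S, p i • x i - ∑ i ∈ S, q i • y i‖ ≤ A + B * ∑ i ∈ S, |p i - q i| := by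
  have hsplit : ∑ i ∈ S, p i • x i - ∑ i ∈ S, q i • y i
      = ∑ i ∈ S, p i • (x i - y i) + ∑ i ∈ S, (p i - q i) • (y i - z) := by
    simp only [smul_sub, sub_smul, sum_sub_distrib, ← sum_smul, hp1, hq1]
    abel
  rw [hsplit]
  calc _ ≤ ∑ i ∈ S, p i * A + ∑ i ∈ S, |p i - q i| * B := by
        refine (norm_add_le _ _).trans (add_le_add (norm_sum_le_of_le _ fun i hi => ?_)
          (norm_sum_le_of_le _ fun i hi => ?_))
        · rw [norm_smul, Real.norm_of_nonneg (hp i hi)]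
          exact mul_le_mul_of_nonneg_left (hxy i hi) (hp i hi)
        · rw [norm_smul, Real.norm_eq_abs]
          exact mul_le_mul_of_nonneg_left (hyz i hi) (abs_nonneg _)
    _ = A + B * ∑ i ∈ S, |p i - q i| := by rw [← sum_mul, hp1, ← sum_mul]; ring

lemma continuous_apply_of_sum_abs_sub_le {X ι : Type*} [PseudoMetricSpace X] (S : Finset ι)
    {P : X → ι → ℝ} {C : ℝ} (hP : ∀ x y, ∑ i ∈ S, |P x i - P y i| ≤ C * dist x y) {i : ι}
    (hi : i ∈ S) : Continuous (P · i) :=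
  (LipschitzWith.of_dist_le' fun x y => (Real.dist_eq _ _).trans_le <|
    (single_le_sum (f := fun i => |P x i - P y i|) (fun _ _ => abs_nonneg _) hi).trans
      (hP x y)).continuous

section InnerProductSpace

variable {E : Type*} [NormedAddCommGroup E] [InnerProductSpace ℝ E] [CompleteSpace E]

theorem hasGradientAt_of_envelope {ι : Type*} (S : Finset ι) {f : ι → E → ℝ} {g : ι → E}
    {P : E → ι → ℝ} {h : E → ℝ} {v : E}
    (hf : ∀ i ∈ S, HasGradientAt (f i) (g i) v) (hP : ∀ i ∈ S, ContinuousAt (P · i) v)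
    (hlow : ∀ w, ∑ i ∈ S, P v i * (f i w - f i v) ≤ h w - h v)
    (hup : ∀ w, h w - h v ≤ ∑ i ∈ S, P w i * (f i w - f i v)) :
    HasGradientAt h (∑ i ∈ S, P v i • g i) v := by
  rw [hasGradientAt_iff_hasFDerivAt, map_sum]
  simp only [map_smul]
  exact hasFDerivAt_of_envelope S (fun i hi => (hf i hi).hasFDerivAt) hP hlow hup

theorem hasGradientAt_entropicObjective_of_isMaxOn {ι : Type*} {S : Finset ι} {ν c : ℝ}
    {K : Set (ι → ℝ)} {f : ι → E → ℝ} {g : ι → E → E} {P : E → ι → ℝ}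
    (hf : ∀ i ∈ S, ∀ v, HasGradientAt (f i) (g i v) v) (hPK : ∀ v, P v ∈ K)
    (hPmax : ∀ v, IsMaxOn (entropicObjective S ν c (f · v)) K (P v))
    (hP : ∀ i ∈ S, Continuous (P · i)) (v : E) :
    HasGradientAt (fun v => entropicObjective S ν c (f · v) (P v)) (∑ i ∈ S, P v i • g i v) v :=
  hasGradientAt_of_envelope S (fun i hi => hf i hi v) (fun i hi => (hP i hi).continuousAt)
    (fun w => (sum_mul_sub_le_entropicObjective_sub (hPK v) (hPK w) (hPmax v) (hPmax w)).1)
    (fun w => (sum_mul_sub_le_entropicObjective_sub (hPK v) (hPK w) (hPmax v) (hPmax w)).2)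

lemma HasGradientAt.add_half_mul_norm_sq {f : E → ℝ} {g x : E} (hf : HasGradientAt f g x)
    (a : ℝ) : HasGradientAt (fun z => f z + a / 2 * ‖z‖ ^ 2) (g + a • x) x := by
  rw [hasGradientAt_iff_hasFDerivAt, map_add]
  refine (hf.hasFDerivAt.fun_add
    ((hasStrictFDerivAt_norm_sq x).hasFDerivAt.const_mul (a / 2))).congr_fderiv ?_
  ext y
  simp only [add_apply, toDual_apply_apply, smul_apply,
    coe_innerSL_apply, nsmul_eq_mul, smul_eq_mul, real_inner_smul_left]
  ring

lemma norm_gradient_le_of_abs_sub_le {f : E → ℝ} {G : ℝ} (hG : 0 ≤ G)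
    (hf : ∀ x y, |f x - f y| ≤ G * ‖x - y‖) (x : E) : ‖gradient f x‖ ≤ G := by
  rw [← (toDual ℝ E).norm_map, toDual_gradient]
  exact norm_fderiv_le_of_lip' ℝ hG (.of_forall fun y => hf y x)

lemma contDiff_one_of_hasGradientAt {f : E → ℝ} {g : E → E} (hf : ∀ x, HasGradientAt f (g x) x)
    (hg : Continuous g) : ContDiff ℝ 1 f :=
  contDiff_one_iff_hasFDerivAt.2
    ⟨fun x => toDual ℝ E (g x), (toDual ℝ E).continuous.comp hg, fun x => (hf x).hasFDerivAt⟩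

lemma norm_sum_smul_gradient_add_smul_sub_le {ι : Type*} (S : Finset ι) {F : ι → E → ℝ}
    {P : E → ι → ℝ} {G L lam κ : ℝ} (hG : 0 ≤ G) (hlam : 0 ≤ lam) (hP : ∀ v, P v ∈ simplexOn S)
    (hPlip : ∀ v w, ∑ i ∈ S, |P v i - P w i| ≤ κ * dist v w)
    (hFlip : ∀ i ∈ S, ∀ v w, |F i v - F i w| ≤ G * ‖v - w‖)
    (hFgrad : ∀ i ∈ S, ∀ v w, ‖gradient (F i) v - gradient (F i) w‖ ≤ L * ‖v - w‖) (v w : E) :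
    ‖∑ i ∈ S, P v i • (gradient (F i) v + lam • v) - ∑ i ∈ S, P w i • (gradient (F i) w + lam • w)‖
      ≤ (L + lam + G * κ) * ‖v - w‖ := by
  refine (norm_sum_smul_sub_sum_smul_le S (z := lam • w) (A := (L + lam) * ‖v - w‖) (B := G)
    (fun i _ => (hP v).1 i) (hP v).2.2 (hP w).2.2 (fun i hi => ?_) (fun i hi => ?_)).trans ?_
  · rw [add_sub_add_comm, ← smul_sub, add_mul]
    refine (norm_add_le _ _).trans (add_le_add (hFgrad i hi v w) ?_)
    rw [norm_smul, Real.norm_of_nonneg hlam]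
  · simpa using norm_gradient_le_of_abs_sub_le hG (hFlip i hi) w
  · calc _ ≤ (L + lam) * ‖v - w‖ + G * (κ * dist v w) := by gcongr; exact hPlip v w
      _ = _ := by rw [dist_eq_norm]; ring

end InnerProductSpace

theorem smoothed_partial_superquantile_properties_general
    (d n m : ℕ) (hm : 0 < m)
    (θ lam ν G L : ℝ) (hθ : θ ∈ Set.Ioc (0:ℝ) 1) (hlam : 0 ≤ lam) (hν : 0 < ν)
    (hG : 0 ≤ G)
    (S : Finset (Fin n)) (hS : S.card = m)
    (F : Fin n → EuclideanSpace ℝ (Fin d) → ℝ)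
    (hFlip : ∀ i v v', |F i v - F i v'| ≤ G * ‖v - v'‖)
    (hFc1 : ∀ i, ContDiff ℝ 1 (F i))
    (hFgrad : ∀ i v v', ‖gradient (F i) v - gradient (F i) v'‖ ≤ L * ‖v - v'‖) :
    ∀ h : EuclideanSpace ℝ (Fin d) → ℝ,
      h = (fun v => sSup {x : ℝ | ∃ π : Fin n → ℝ, (∀ i, 0 ≤ π i) ∧ (∀ i ∉ S, π i = 0) ∧
        (∑ i ∈ S, π i = 1) ∧ (∀ i, π i ≤ 1 / (θ * m)) ∧
        x = (∑ i ∈ S, π i * (F i v + lam / 2 * ‖v‖ ^ 2))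
          - ν * ∑ i ∈ S, π i * Real.log (π i * m)}) →
    (∀ v, ∃! π : Fin n → ℝ, (∀ i, 0 ≤ π i) ∧ (∀ i ∉ S, π i = 0) ∧
        (∑ i ∈ S, π i = 1) ∧ (∀ i, π i ≤ 1 / (θ * m)) ∧
        (∑ i ∈ S, π i * (F i v + lam / 2 * ‖v‖ ^ 2))
          - ν * ∑ i ∈ S, π i * Real.log (π i * m) = h v) ∧
    ContDiff ℝ 1 h ∧
    (∀ v, ∀ π : Fin n → ℝ, (∀ i, 0 ≤ π i) → (∀ i ∉ S, π i = 0) →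
      (∑ i ∈ S, π i = 1) → (∀ i, π i ≤ 1 / (θ * m)) →
      (∑ i ∈ S, π i * (F i v + lam / 2 * ‖v‖ ^ 2))
        - ν * ∑ i ∈ S, π i * Real.log (π i * m) = h v →
      gradient h v = ∑ i ∈ S, π i • gradient (fun z => F i z + lam / 2 * ‖z‖ ^ 2) v) ∧
    (∀ v v', ‖gradient h v - gradient h v'‖ ≤ (L + lam + G ^ 2 / ν) * ‖v - v'‖) := by
  intro h hh
  subst hS
  set f : Fin n → EuclideanSpace ℝ (Fin d) → ℝ := fun i z => F i z + lam / 2 * ‖z‖ ^ 2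
  have hc : (#S : ℝ) ≠ 0 := by positivity
  have hK := convex_cappedSimplexOn (S := S) (1 / (θ * #S))
  have hKS := cappedSimplexOn_subset_simplexOn (S := S) (1 / (θ * #S))
  choose P hPK hPmax using fun v => exists_isMaxOn_entropicObjective (S := S) (ν := ν)
    (isCompact_cappedSimplexOn _) (cappedSimplexOn_nonempty (card_pos.1 hm) hθ) hc (f · v)
  obtain rfl : h = fun v => entropicObjective S ν #S (f · v) (P v) :=
    hh.trans (funext fun v => sSup_entropicObjective_cappedSimplexOn (hPK v) (hPmax v))
  have hl1 : ∀ v w, ∑ i ∈ S, |P v i - P w i| ≤ G / ν * dist v w := fun v w => by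
    rw [dist_eq_norm, div_mul_eq_mul_div]
    refine entropic_l1_le hK hKS hν hc (hPK v) (hPK w) (hPmax v) (hPmax w)
      (a := lam / 2 * (‖v‖ ^ 2 - ‖w‖ ^ 2)) fun i _ => ?_
    convert hFlip i v w using 2
    ring
  have hgradf : ∀ i v, HasGradientAt (f i) (gradient (F i) v + lam • v) v := fun i v =>
    ((hFc1 i).differentiable one_ne_zero v).hasGradientAt.add_half_mul_norm_sq lam
  have hgrad := hasGradientAt_entropicObjective_of_isMaxOn (fun i _ => hgradf i) hPK hPmax
    fun i hi => continuous_apply_of_sum_abs_sub_le S hl1 hi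
  have hlip := norm_sum_smul_gradient_add_smul_sub_le S hG hlam (fun v => hKS (hPK v)) hl1
    (fun i _ => hFlip i) (fun i _ => hFgrad i)
  refine ⟨fun v => ⟨P v, ?_, fun π ⟨h0, hS0, h1, hcap, hπv⟩ =>
      eq_of_isMaxOn_entropicObjective hK hKS hν hc (hPK v) (hPmax v) ⟨h0, hS0, h1, hcap⟩ hπv⟩,
    contDiff_one_of_hasGradientAt hgrad
      (LipschitzWith.of_dist_le' fun v w => by simpa only [dist_eq_norm] using hlip v w).continuous,
    fun v π h0 hS0 h1 hcap hπv => ?_, fun v w => ?_⟩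
  · obtain ⟨h0, hS0, h1, hcap⟩ := hPK v
    exact ⟨h0, hS0, h1, hcap, rfl⟩
  · rw [(hgrad v).gradient,
      eq_of_isMaxOn_entropicObjective hK hKS hν hc (hPK v) (hPmax v) ⟨h0, hS0, h1, hcap⟩ hπv]
    exact sum_congr rfl fun i _ => by rw [(hgradf i v).gradient]
  · rw [(hgrad v).gradient, (hgrad w).gradient]
    exact (hlip v w).trans_eq (by ring)

/-- Properties of the smoothed partial superquantile
`h(v) = max_{π ∈ P_{θ,S}} ( ∑_{i∈S} π i F̃ i v − ν D_S(π) )` with `F̃_i = F_i + (λ/2)‖·‖²`: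
for each `v` the maximizer is unique, `h` is continuously differentiable with
`∇h(v) = ∑_{i∈S} π*_i(v) ∇F̃_i(v)`, and `h` is `L'`-smooth with `L' = L + λ + G²/ν`. -/
theorem smoothed_partial_superquantile_properties
    (d n m : ℕ) (hm : 0 < m)
    (θ lam ν G L : ℝ) (hθ : θ ∈ Set.Ioc (0:ℝ) 1) (hlam : 0 ≤ lam) (hν : 0 < ν)
    (hG : 0 ≤ G) (hL : 0 ≤ L)
    (S : Finset (Fin n)) (hS : S.card = m)
    (F : Fin n → EuclideanSpace ℝ (Fin d) → ℝ)
    (hFlip : ∀ i v v', |F i v - F i v'| ≤ G * ‖v - v'‖)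
    (hFc1 : ∀ i, ContDiff ℝ 1 (F i))
    (hFgrad : ∀ i v v', ‖gradient (F i) v - gradient (F i) v'‖ ≤ L * ‖v - v'‖) :
    ∀ h : EuclideanSpace ℝ (Fin d) → ℝ,
      h = (fun v => sSup {x : ℝ | ∃ π : Fin n → ℝ, (∀ i, 0 ≤ π i) ∧ (∀ i ∉ S, π i = 0) ∧
        (∑ i ∈ S, π i = 1) ∧ (∀ i, π i ≤ 1 / (θ * m)) ∧
        x = (∑ i ∈ S, π i * (F i v + lam / 2 * ‖v‖ ^ 2))
          - ν * ∑ i ∈ S, π i * Real.log (π i * m)}) →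
    (∀ v, ∃! π : Fin n → ℝ, (∀ i, 0 ≤ π i) ∧ (∀ i ∉ S, π i = 0) ∧
        (∑ i ∈ S, π i = 1) ∧ (∀ i, π i ≤ 1 / (θ * m)) ∧
        (∑ i ∈ S, π i * (F i v + lam / 2 * ‖v‖ ^ 2))
          - ν * ∑ i ∈ S, π i * Real.log (π i * m) = h v) ∧
    ContDiff ℝ 1 h ∧
    (∀ v, ∀ π : Fin n → ℝ, (∀ i, 0 ≤ π i) → (∀ i ∉ S, π i = 0) →
      (∑ i ∈ S, π i = 1) → (∀ i, π i ≤ 1 / (θ * m)) →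
      (∑ i ∈ S, π i * (F i v + lam / 2 * ‖v‖ ^ 2))
        - ν * ∑ i ∈ S, π i * Real.log (π i * m) = h v →
      gradient h v = ∑ i ∈ S, π i • gradient (fun z => F i z + lam / 2 * ‖z‖ ^ 2) v) ∧
    (∀ v v', ‖gradient h v - gradient h v'‖ ≤ (L + lam + G ^ 2 / ν) * ‖v - v'‖) :=
  smoothed_partial_superquantile_properties_general d n m hm θ lam ν G L hθ hlam hν hG S hS F hFlip
    hFc1 hFgrad
end
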